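/- arXiv:2405.14299 — 7 statements merged into one kernel-verified Lean document; each statement's English description precedes it below -/
import Mathlib

section
/- If a graph G has a dominating K_t-model, then G contains a path v_1, v_2, …, v_t (on t distinct vertices, with v_i adjacent to v_{i+1}) such that deg_G(v_t) ≥ t − 1 and deg_G(v_i) ≥ i for all 1 ≤ i ≤ t − 1. -/
/-
Walk backwards through the model: pick `v_t ∈ T_t` and, given `v_{i+1} ∈ T_{i+1}`, a neighbour
`v_i ∈ T_i` of it, which exists by domination. The `v_i` are distinct because the `T_i` are
disjoint. Each `v_i` has a neighbour in every `T_j` with `j < i`, and for `i < t` also `v_{i+1}`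
in `T_{i+1}`; disjointness makes these neighbours distinct, giving the degree bounds.
-/

/-- A *dominating K_t-model* in a graph G is a sequence (T 0, ..., T (t-1)) of pairwise
disjoint non-empty connected subgraphs of G such that for all i < j, every vertex of T j
has a neighbour (in G) in T i. -/
def SimpleGraph.IsDomKtModel {V : Type*} (G : SimpleGraph V) (t : ℕ) (T : Fin t → Set V) : Prop :=
  (∀ i, (T i).Nonempty) ∧
  (Pairwise fun i j => Disjoint (T i) (T j)) ∧
  (∀ i, (G.induce (T i)).Connected) ∧
  (∀ i j : Fin t, i < j → ∀ v ∈ T j, ∃ u ∈ T i, G.Adj v u)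

/-- G contains a dominating K_t-model. -/
def SimpleGraph.HasDomKtModel {V : Type*} (G : SimpleGraph V) (t : ℕ) : Prop :=
  ∃ T : Fin t → Set V, G.IsDomKtModel t T

open Finset Function

lemma injective_of_pairwise_disjoint_of_mem {ι α : Type*} {T : ι → Set α}
    (hT : Pairwise (Disjoint on T)) {f : ι → α} (hf : ∀ i, f i ∈ T i) : Injective f := by
  intro i j hij
  by_contra hne
  exact Set.disjoint_left.mp (hT hne) (hf i) (hij ▸ hf j)

namespace SimpleGraph

variable {V : Type*} (G : SimpleGraph V)

lemma card_le_degree_of_forall_exists_adj [Fintype V] [DecidableRel G.Adj] {ι : Type*}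
    {T : ι → Set V} (hT : Pairwise (Disjoint on T)) {x : V} {s : Finset ι}
    (hs : ∀ j ∈ s, ∃ u ∈ T j, G.Adj x u) : #s ≤ G.degree x := by
  choose u hu hadj using hs
  let f : s → V := fun j => u j j.2
  have hf : Injective f :=
    injective_of_pairwise_disjoint_of_mem (T := fun j : s => T j)
      (fun _ _ hne => hT (Subtype.coe_ne_coe.mpr hne)) (fun j => hu j j.2)
  rw [← card_neighborFinset_eq_degree, ← Fintype.card_coe s,
    ← Fintype.card_coe (G.neighborFinset x)]
  exact Fintype.card_le_of_injective (fun j => ⟨f j, (mem_neighborFinset G x _).mpr (hadj j j.2)⟩)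
    fun i j hij => hf (congrArg Subtype.val hij)

lemma exists_adj_chain {n : ℕ} (T : Fin (n + 1) → Set V) (hlast : (T (Fin.last n)).Nonempty)
    (hstep : ∀ i : Fin n, ∀ x ∈ T i.succ, ∃ y ∈ T i.castSucc, G.Adj x y) :
    ∃ v : Fin (n + 1) → V, (∀ i, v i ∈ T i) ∧ ∀ i : Fin n, G.Adj (v i.castSucc) (v i.succ) := by
  induction n with
  | zero => exact ⟨fun _ => hlast.some, fun i => Fin.fin_one_eq_zero i ▸ hlast.some_mem, nofun⟩
  | succ n ih =>
    obtain ⟨w, hwT, hwadj⟩ := ih (T ∘ Fin.succ) hlast fun i => hstep i.succ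
    obtain ⟨y, hyT, hyw⟩ := hstep 0 (w 0) (hwT 0)
    refine ⟨Fin.cons y w, Fin.cases hyT hwT, Fin.cases hyw.symm fun i => ?_⟩
    simpa only [← Fin.succ_castSucc, Fin.cons_succ] using hwadj i

lemma IsDomKtModel.exists_adj_chain {n : ℕ} {T : Fin (n + 1) → Set V}
    (hT : G.IsDomKtModel (n + 1) T) :
    ∃ v : Fin (n + 1) → V, (∀ i, v i ∈ T i) ∧ ∀ i : Fin n, G.Adj (v i.castSucc) (v i.succ) :=
  G.exists_adj_chain T (hT.1 _) fun i x hx => hT.2.2.2 _ _ i.castSucc_lt_succ x hx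

end SimpleGraph

/-- If a graph G has a dominating K_t-model, then G contains a path v_1, ..., v_t on t
distinct vertices (0-indexed here, so v i stands for v_{i+1}) such that deg(v_t) ≥ t - 1
and deg(v_i) ≥ i for 1 ≤ i ≤ t - 1. -/
theorem exists_degree_path_of_hasDomKtModel {V : Type*} [Fintype V] (G : SimpleGraph V)
    [DecidableRel G.Adj] (t : ℕ) (h : G.HasDomKtModel t) :
    ∃ v : Fin t → V, Function.Injective v ∧
      (∀ (i : ℕ) (hi : i + 1 < t),
        G.Adj (v ⟨i, Nat.lt_of_succ_lt hi⟩) (v ⟨i + 1, hi⟩)) ∧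
      (∀ (i : ℕ) (hi : i < t),
        (i + 1 = t → t - 1 ≤ G.degree (v ⟨i, hi⟩)) ∧
        (i + 1 < t → i + 1 ≤ G.degree (v ⟨i, hi⟩))) := by
  obtain ⟨T, hT⟩ := h
  cases t with
  | zero => exact ⟨Fin.elim0, fun a => a.elim0, fun _ hi => by omega, fun _ hi => by omega⟩
  | succ n =>
    obtain ⟨v, hvT, hadj⟩ := hT.exists_adj_chain
    have hdeg (i : Fin (n + 1)) (s : Finset (Fin (n + 1)))
        (hs : ∀ j ∈ s, ∃ u ∈ T j, G.Adj (v i) u) : #s ≤ G.degree (v i) :=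
      G.card_le_degree_of_forall_exists_adj hT.2.1 hs
    have hbelow (i : Fin (n + 1)) : ∀ j ∈ Iio i, ∃ u ∈ T j, G.Adj (v i) u :=
      fun j hj => hT.2.2.2 j i (mem_Iio.mp hj) _ (hvT i)
    refine ⟨v, injective_of_pairwise_disjoint_of_mem hT.2.1 hvT,
      fun i hi => hadj ⟨i, by omega⟩, fun i hi => ⟨fun hlast => ?_, fun hnext => ?_⟩⟩
    · obtain rfl : i = n := by omega
      simpa [Fin.card_Iio] using hdeg ⟨i, hi⟩ _ (hbelow ⟨i, hi⟩)
    · have hsucc : ∃ u ∈ T ⟨i + 1, hnext⟩, G.Adj (v ⟨i, hi⟩) u :=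
        ⟨_, hvT _, hadj ⟨i, by omega⟩⟩
      have hnotMem : (⟨i + 1, hnext⟩ : Fin (n + 1)) ∉ Iio ⟨i, hi⟩ := by simp [Fin.lt_def]
      simpa [card_insert_of_notMem hnotMem, Fin.card_Iio] using
        hdeg ⟨i, hi⟩ _ (forall_mem_insert _ _ _ |>.mpr ⟨hsucc, hbelow ⟨i, hi⟩⟩)
end

section
/- If G is a graph in which the set of vertices of degree at least 3 is an independent set (i.e., no two adjacent vertices both have degree at least 3), then G contains no dominating K_4-model. In particular, for n ≥ 4, any graph obtained from K_n by subdividing every edge at least once contains no dominating K_4-model. -/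
private lemma three_le_degree_of_adj {V : Type*} [Fintype V] (G : SimpleGraph V)
    [DecidableRel G.Adj] {v a b c : V}
    (ha : G.Adj v a) (hb : G.Adj v b) (hc : G.Adj v c)
    (hab : a ≠ b) (hac : a ≠ c) (hbc : b ≠ c) : 3 ≤ G.degree v := by
  classical
  have hsub : ({a, b, c} : Finset V) ⊆ G.neighborFinset v := by
    intro x hx
    simp only [Finset.mem_insert, Finset.mem_singleton] at hx
    rcases hx with rfl | rfl | rfl <;> simpa using ‹_›
  calc 3 = ({a, b, c} : Finset V).card := by
        rw [Finset.card_insert_of_notMem (by simp [hab, hac]),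
          Finset.card_insert_of_notMem (by simp [hbc]), Finset.card_singleton]
    _ ≤ _ := Finset.card_le_card hsub

/-- If in a graph G the set of vertices of degree at least 3 is an independent set (no two
adjacent vertices both have degree at least 3), then G contains no dominating K_4-model. -/
theorem not_hasDomK4Model_of_bigDegree_indep {V : Type*} [Fintype V] (G : SimpleGraph V)
    [DecidableRel G.Adj]
    (h : ∀ u v, G.Adj u v → 3 ≤ G.degree u → G.degree v < 3) :
    ¬ G.HasDomKtModel 4 := by
  rintro ⟨T, hne, hdisj, -, hdom⟩
  obtain ⟨v, hv⟩ := hne 3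
  obtain ⟨u0, hu0, hadj0⟩ := hdom 0 3 (by decide) v hv
  obtain ⟨u1, hu1, hadj1⟩ := hdom 1 3 (by decide) v hv
  obtain ⟨u2, hu2, hadj2⟩ := hdom 2 3 (by decide) v hv
  obtain ⟨w0, hw0, hb0⟩ := hdom 0 2 (by decide) u2 hu2
  obtain ⟨w1, hw1, hb1⟩ := hdom 1 2 (by decide) u2 hu2
  have hdegv : 3 ≤ G.degree v :=
    three_le_degree_of_adj G hadj0 hadj1 hadj2
      ((hdisj (show (0 : Fin 4) ≠ 1 by decide)).ne_of_mem hu0 hu1)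
      ((hdisj (show (0 : Fin 4) ≠ 2 by decide)).ne_of_mem hu0 hu2)
      ((hdisj (show (1 : Fin 4) ≠ 2 by decide)).ne_of_mem hu1 hu2)
  have hdegu : 3 ≤ G.degree u2 :=
    three_le_degree_of_adj G hb0 hb1 hadj2.symm
      ((hdisj (show (0 : Fin 4) ≠ 1 by decide)).ne_of_mem hw0 hw1)
      ((hdisj (show (0 : Fin 4) ≠ 3 by decide)).ne_of_mem hw0 hv)
      ((hdisj (show (1 : Fin 4) ≠ 3 by decide)).ne_of_mem hw1 hv)
  exact absurd hdegu (not_le.2 (h v u2 hadj2 hdegv))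
end

section
/- Every non-empty graph G with minimum degree at least 3 contains a dominating K_4-model. -/
namespace SimpleGraph

variable {V : Type*} {G : SimpleGraph V}

namespace Walk

lemma penultimate_append {u v w : V} (p : G.Walk u v) {q : G.Walk v w} (hq : ¬ q.Nil) :
    (p.append q).penultimate = q.penultimate := by
  induction p with
  | nil => rfl
  | cons h p ih =>
    rw [cons_append, penultimate_cons_of_not_nil _ _ (by simp [nil_append_iff, hq]), ih hq]

lemma IsPath.exists_isCycle_of_adj_start {v w x : V} {p : G.Walk v w} (hp : p.IsPath)
    (hx : x ∈ p.support) (hvx : G.Adj v x) (hxs : x ≠ p.snd) :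
    ∃ c : G.Walk v v, c.IsCycle ∧ ∀ y ∈ c.support, y ∈ p.support := by
  classical
  set q := p.takeUntil x hx
  have hq : q.IsPath := hp.takeUntil hx
  have hlen : 1 < q.length := by
    by_contra! hle
    have hsnd : q.snd = p.snd := snd_takeUntil hvx.ne' p hx
    have hqx : q.snd = x := q.getVert_of_length_le hle
    exact hxs (hqx ▸ hsnd)
  refine ⟨q.append hvx.symm.toWalk, ?_, ?_⟩
  · refine hq.isCycle_append (by simp [hvx.ne']) ?_ (Or.inl hlen)
    simpa using List.nodup_cons.mp (q.cons_tail_support ▸ hq.support_nodup) |>.1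
  · intro y hy
    rw [mem_support_append_iff] at hy
    rcases hy with hy | hy
    · exact p.support_takeUntil_subset_support hx hy
    · simp only [Adj.toWalk, support_cons, support_nil, List.mem_cons, List.not_mem_nil,
        or_false] at hy
      rcases hy with rfl | rfl
      · exact hx
      · exact p.start_mem_support

/-- `c` and `Q` form a theta graph; the arc of `c` between `z` and `t` that misses `u`, together
with `Q`, gives two distinct paths from `z` to `t`, hence a cycle. -/
lemma IsCycle.exists_isCycle_not_mem_support {z t u : V} {c : G.Walk z z} (hc : c.IsCycle)
    (ht : t ∈ c.support) (htz : t ≠ z) (huz : u ≠ z) (hut : u ≠ t)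
    {Q : G.Walk z t} (hQ : Q.IsPath) (hQu : u ∉ Q.support) (hsnd : Q.snd ≠ c.snd)
    (hpen : Q.snd ≠ c.penultimate) :
    ∃ (w : V) (d : G.Walk w w), d.IsCycle ∧ u ∉ d.support ∧
      ∀ x ∈ d.support, x ∈ c.support ∨ x ∈ Q.support := by
  classical
  set p := c.takeUntil t ht
  set q := c.dropUntil t ht
  have hpq : p.append q = c := c.take_spec ht
  have hpnil : ¬ p.Nil := fun h => htz h.eq.symm
  have hqnil : ¬ q.Nil := fun h => htz h.eq
  have hp : p.IsPath := hc.isPath_takeUntil ht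
  have hq : q.IsPath := IsCycle.isPath_of_append_right hpnil (hpq ▸ hc)
  have hsplit : u ∉ p.support ∨ u ∉ q.support := by
    by_contra! h
    have hnd := hc.support_nodup
    rw [← hpq, tail_support_append, List.nodup_append'] at hnd
    exact hnd.2.2 (((mem_support_iff p).1 h.1).resolve_left huz)
      (((mem_support_iff q).1 h.2).resolve_left hut)
  obtain ⟨r, hr, hru, hrc, hrsnd⟩ : ∃ r : G.Walk z t, r.IsPath ∧ u ∉ r.support ∧
      (∀ x ∈ r.support, x ∈ c.support) ∧ (r.snd = c.snd ∨ r.snd = c.penultimate) := by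
    rcases hsplit with h | h
    · exact ⟨p, hp, h, fun x hx => c.support_takeUntil_subset_support ht hx,
        Or.inl (snd_takeUntil htz c ht)⟩
    · refine ⟨q.reverse, hq.reverse, by simpa using h,
        fun x hx => c.support_dropUntil_subset_support ht (by simpa using hx), Or.inr ?_⟩
      rw [snd_reverse, ← penultimate_append p hqnil, hpq]
  have hne : r ≠ Q := by
    rintro rfl
    rcases hrsnd with h | h
    exacts [hsnd h, hpen h]
  obtain ⟨w, -, -, d, hd, hdsub⟩ := hr.exists_isCycle_sublist_of_ne hQ hne
  have hdrQ : ∀ x ∈ d.support, x ∈ r.support ∨ x ∈ Q.support := fun x hx => by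
    simpa using List.mem_append.1 (hdsub.subset hx) |>.imp_right
      fun h => List.mem_reverse.1 (List.mem_of_mem_tail h)
  refine ⟨w, d, hd, fun hud => ?_, fun x hx => (hdrQ x hx).imp_left (hrc x)⟩
  rcases hdrQ u hud with h | h
  exacts [hru h, hQu h]

lemma IsCycle.exists_edge_and_avoiding_walk {v : V} {c : G.Walk v v} (hc : c.IsCycle) :
    ∃ d ∈ c.support, ∃ (e f : V) (p : G.Walk e f), G.Adj v d ∧ G.Adj d e ∧ G.Adj f v ∧
      v ∉ p.support ∧ d ∉ p.support ∧ ∀ x ∈ p.support, x ∈ c.support := by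
  cases c with
  | nil => exact absurd hc not_isCycle_nil
  | cons hvd q =>
    rw [cons_isCycle_iff] at hc
    cases q with
    | nil => exact absurd hvd G.irrefl
    | cons hde r =>
      rw [cons_isPath_iff] at hc
      obtain ⟨⟨hr, hdr⟩, hedge⟩ := hc
      have hrnil : ¬ r.Nil := by
        intro h
        cases h
        simp [Sym2.eq_swap] at hedge
      have hvr : v ∉ r.dropLast.support := by
        have hnd := hr.support_nodup
        rw [← support_dropLast_concat hrnil, List.nodup_append] at hnd
        exact fun hv => hnd.2.2 v hv v (by simp) rfl
      refine ⟨_, by simp, _, _, r.dropLast, hvd, hde, adj_penultimate hrnil, hvr,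
        fun h => hdr (by rw [support_dropLast hrnil] at h; exact List.mem_of_mem_dropLast h), ?_⟩
      intro x hx
      rw [support_dropLast hrnil] at hx
      simp [List.mem_of_mem_dropLast hx]

lemma exists_isPath_of_adj_mem {S B : Set V} {y v x : V} (p : G.Walk y v)
    (hp : ∀ x ∈ p.support, x ∉ B ∧ x ∉ S) (hvx : G.Adj v x) (hxS : x ∈ S) (hxB : x ∉ B) :
    ∃ Q : G.Walk y x, Q.IsPath ∧ ∀ x' ∈ Q.support, x' ∉ B ∧ (x' ∈ S → x' = x) := by
  classical
  have hpb : ∀ x' ∈ p.bypass.support, x' ∉ B ∧ x' ∉ S :=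
    fun x' hx' => hp x' (p.support_bypass_subset_support hx')
  refine ⟨p.bypass.concat hvx, p.bypass_isPath.concat (fun h => (hpb x h).2 hxS) hvx, ?_⟩
  intro x' hx'
  rw [support_concat, List.mem_append, List.mem_singleton] at hx'
  rcases hx' with hx' | rfl
  · exact ⟨(hpb x' hx').1, fun h => absurd h (hpb x' hx').2⟩
  · exact ⟨hxB, fun _ => rfl⟩

end Walk

open Walk

lemma connected_induce_singleton (v : V) : (G.induce {v}).Connected :=
  ⟨Preconnected.of_subsingleton⟩

lemma Connected.induce_insert {A : Set V} (hA : (G.induce A).Connected) {a u : V} (ha : a ∈ A)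
    (hau : G.Adj a u) : (G.induce (insert u A)).Connected := by
  rw [← Set.union_singleton]
  exact connected_induce_union hA.preconnected (connected_induce_singleton u).preconnected ha
    rfl hau

/-- A longest path inside `R` closes up into a cycle at its start vertex. -/
lemma exists_isCycle_of_forall_exists_adj_ne [Fintype V] {R : Set V} (hR : R.Nonempty)
    (h : ∀ v ∈ R, ∀ a, ∃ x ∈ R, G.Adj v x ∧ x ≠ a) :
    ∃ (v : V) (c : G.Walk v v), c.IsCycle ∧ ∀ x ∈ c.support, x ∈ R := by
  classical
  let P : ℕ → Prop := fun n =>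
    ∃ (v w : V) (p : G.Walk v w), p.IsPath ∧ (∀ x ∈ p.support, x ∈ R) ∧ p.length = n
  obtain ⟨r, hr⟩ := hR
  obtain ⟨v, w, p, hp, hpR, hlen⟩ : P (Nat.findGreatest P (Fintype.card V)) :=
    Nat.findGreatest_spec (Nat.zero_le _) ⟨r, r, nil, by simp, by simp [hr], rfl⟩
  have hmax : ∀ x ∈ R, G.Adj v x → x ∈ p.support := by
    intro x hx hvx
    by_contra hxp
    have hxp' : (cons hvx.symm p).IsPath := hp.cons hxp
    refine Nat.findGreatest_is_greatest (P := P) (n := Fintype.card V) (k := p.length + 1)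
      (by omega) (by simpa using hxp'.length_lt.le) ⟨x, w, _, hxp', ?_, rfl⟩
    simpa [hx] using hpR
  obtain ⟨x, hxR, hvx, hxs⟩ := h v (hpR v p.start_mem_support) p.snd
  obtain ⟨c, hc, hcp⟩ := hp.exists_isCycle_of_adj_start (hmax x hxR hvx) hvx hxs
  exact ⟨v, c, hc, fun y hy => hpR y (hcp y hy)⟩

lemma exists_adj_ne_ne_of_three_le_degree {v : V} [Fintype (G.neighborSet v)]
    (h : 3 ≤ G.degree v) (a b : V) : ∃ y, G.Adj v y ∧ y ≠ a ∧ y ≠ b := by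
  classical
  by_contra! hno
  have hsub : G.neighborFinset v ⊆ {a, b} := fun y hy => by
    have := hno y ((G.mem_neighborFinset v y).1 hy)
    simp only [Finset.mem_insert, Finset.mem_singleton]
    tauto
  have := (Finset.card_le_card hsub).trans Finset.card_le_two
  rw [card_neighborFinset_eq_degree] at this
  omega

lemma exists_isCycle_of_forall_adj_mem_or_eq [Fintype V] [DecidableRel G.Adj]
    (hdeg : ∀ v, 3 ≤ G.degree v) {R : Set V} (hR : R.Nonempty) (u : V)
    (hclosed : ∀ v ∈ R, ∀ x, G.Adj v x → x ∈ R ∨ x = u) :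
    ∃ (v : V) (c : G.Walk v v), c.IsCycle ∧ ∀ x ∈ c.support, x ∈ R := by
  refine exists_isCycle_of_forall_exists_adj_ne hR fun v hv a => ?_
  obtain ⟨x, hvx, hxa, hxu⟩ := exists_adj_ne_ne_of_three_le_degree (hdeg v) a u
  exact ⟨x, (hclosed v hv x hvx).resolve_right hxu, hvx, hxa⟩

def vertexBoundary (G : SimpleGraph V) (A : Set V) : Set V :=
  {v | v ∉ A ∧ ∃ a ∈ A, G.Adj a v}

lemma vertexBoundary_nonempty_of_reachable {A : Set V} {a b : V} (ha : a ∈ A) (hb : b ∉ A)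
    (hab : G.Reachable a b) : (G.vertexBoundary A).Nonempty := by
  obtain ⟨p⟩ := hab
  obtain ⟨d, -, hd, hd'⟩ := p.exists_boundary_dart A ha hb
  exact ⟨d.snd, hd', d.fst, hd, d.adj⟩

lemma exists_isCycle_of_vertexBoundary_subset_singleton [Fintype V] [DecidableRel G.Adj]
    (hdeg : ∀ v, 3 ≤ G.degree v) {B : Set V} {w a ζ : V} (hB : G.vertexBoundary B ⊆ {w})
    (hζB : ζ ∉ B) (hζw : ζ ≠ w) (hζ : G.Reachable a ζ) :
    ∃ (v : V) (c : G.Walk v v), c.IsCycle ∧ (∀ x ∈ c.support, x ∉ B ∧ x ≠ w) ∧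
      G.Reachable a v := by
  let R : Set V := {x | x ∉ B ∧ x ≠ w ∧ G.Reachable a x}
  have hclosed : ∀ v ∈ R, ∀ x, G.Adj v x → x ∈ R ∨ x = w := by
    rintro v ⟨hvB, hvw, hav⟩ x hvx
    by_cases hxw : x = w
    · exact Or.inr hxw
    · exact Or.inl ⟨fun hxB => hvw (hB ⟨hvB, x, hxB, hvx.symm⟩), hxw, hav.trans hvx.reachable⟩
  obtain ⟨v, c, hc, hcR⟩ :=
    exists_isCycle_of_forall_adj_mem_or_eq hdeg (R := R) ⟨ζ, hζB, hζw, hζ⟩ w hclosed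
  exact ⟨v, c, hc, fun x hx => ⟨(hcR x hx).1, (hcR x hx).2.1⟩, (hcR v c.start_mem_support).2.2⟩

def HasReachableCycleOutside (G : SimpleGraph V) (A : Set V) : Prop :=
  ∃ (v : V) (c : G.Walk v v), c.IsCycle ∧ (∀ x ∈ c.support, x ∉ A) ∧ ∃ a ∈ A, G.Reachable a v

lemma hasReachableCycleOutside_singleton [Fintype V] [DecidableRel G.Adj]
    (hdeg : ∀ v, 3 ≤ G.degree v) (w : V) : G.HasReachableCycleOutside {w} := by
  obtain ⟨y, hwy, -⟩ := exists_adj_ne_ne_of_three_le_degree (hdeg w) w w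
  obtain ⟨v, c, hc, hcw, hwv⟩ := exists_isCycle_of_vertexBoundary_subset_singleton hdeg
    (B := ∅) (by simp [vertexBoundary]) (Set.notMem_empty y) hwy.ne' hwy.reachable
  exact ⟨v, c, hc, fun x hx => (hcw x hx).2, w, rfl, hwv⟩

section Maximal

variable {A : Set V}

lemma mem_support_of_mem_vertexBoundary
    (hA : Maximal (fun B => (G.induce B).Connected ∧ G.HasReachableCycleOutside B) A)
    {u : V} (hu : u ∈ G.vertexBoundary A) {v : V} {c : G.Walk v v} (hc : c.IsCycle)
    (hcA : ∀ x ∈ c.support, x ∉ A) (hreach : ∃ a ∈ A, G.Reachable a v) : u ∈ c.support := by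
  by_contra huc
  obtain ⟨huA, b, hb, hbu⟩ := hu
  refine huA (hA.2 ⟨hA.1.1.induce_insert hb hbu, v, c, hc, fun x hx hxu => ?_, ?_⟩
    (Set.subset_insert u A) (Set.mem_insert u A))
  · rcases hxu with rfl | hxA
    exacts [huc hx, hcA x hx hxA]
  · obtain ⟨a, ha, hav⟩ := hreach
    exact ⟨a, Set.mem_insert_of_mem u ha, hav⟩

lemma not_vertexBoundary_subset_singleton [Fintype V] [DecidableRel G.Adj]
    (hdeg : ∀ v, 3 ≤ G.degree v)
    (hA : Maximal (fun B => (G.induce B).Connected ∧ G.HasReachableCycleOutside B) A)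
    {w ζ a : V} (hζA : ζ ∉ A) (hζw : ζ ≠ w) (ha : a ∈ A) (haζ : G.Reachable a ζ) :
    ¬ G.vertexBoundary A ⊆ {w} := by
  intro hsub
  obtain ⟨v, c, hc, hcw, hav⟩ :=
    exists_isCycle_of_vertexBoundary_subset_singleton hdeg hsub hζA hζw haζ
  obtain ⟨u, hu⟩ := vertexBoundary_nonempty_of_reachable ha hζA haζ
  have huc := mem_support_of_mem_vertexBoundary hA hu hc (fun x hx => (hcw x hx).1) ⟨a, ha, hav⟩
  exact (hcw u huc).2 (hsub hu)

/-- Otherwise the vertices reachable from `y` avoiding `A` and `c` could be left only through `z`,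
so they would carry a cycle missing the (nonempty) vertex boundary of `A`, which lies on `c`. -/
lemma exists_isPath_to_support [Fintype V] [DecidableRel G.Adj] (hdeg : ∀ v, 3 ≤ G.degree v)
    (hA : Maximal (fun B => (G.induce B).Connected ∧ G.HasReachableCycleOutside B) A)
    {z : V} {c : G.Walk z z} (hc : c.IsCycle) (hcA : ∀ x ∈ c.support, x ∉ A)
    (hreach : ∃ a ∈ A, G.Reachable a z) {y : V} (hzy : G.Adj z y) (hyA : y ∉ A) :
    ∃ t ∈ c.support, t ≠ z ∧ ∃ Q : G.Walk y t, Q.IsPath ∧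
      ∀ x ∈ Q.support, x ∉ A ∧ (x ∈ c.support → x = t) := by
  by_cases hyc : y ∈ c.support
  · exact ⟨y, hyc, hzy.ne', nil, IsPath.nil, by simp [hyA]⟩
  by_contra hno
  let R : Set V := {v | ∃ p : G.Walk y v, ∀ x ∈ p.support, x ∉ A ∧ x ∉ c.support}
  have hRA : ∀ v ∈ R, v ∉ A ∧ v ∉ c.support := fun v ⟨p, hp⟩ => hp v p.end_mem_support
  have hclosed : ∀ v ∈ R, ∀ x, G.Adj v x → x ∈ R ∨ x = z := by
    rintro v ⟨p, hp⟩ x hvx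
    by_cases hxc : x ∈ c.support
    · exact Or.inr (by_contra fun hxz =>
        hno ⟨x, hxc, hxz, exists_isPath_of_adj_mem p hp hvx hxc (hcA x hxc)⟩)
    refine Or.inl ⟨p.concat hvx, fun x' hx' => ?_⟩
    rw [support_concat, List.mem_append, List.mem_singleton] at hx'
    rcases hx' with hx' | rfl
    · exact hp x' hx'
    refine ⟨fun hxA => (hp v p.end_mem_support).2 ?_, hxc⟩
    exact mem_support_of_mem_vertexBoundary hA ⟨(hp v p.end_mem_support).1, x', hxA, hvx.symm⟩
      hc hcA hreach
  obtain ⟨w, d, hd, hdR⟩ := exists_isCycle_of_forall_adj_mem_or_eq hdeg (R := R)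
    ⟨y, nil, by simp [hyA, hyc]⟩ z hclosed
  obtain ⟨a, ha, haz⟩ := hreach
  obtain ⟨u, hu⟩ := vertexBoundary_nonempty_of_reachable ha (hcA z c.start_mem_support) haz
  obtain ⟨p, -⟩ := hdR w d.start_mem_support
  have hud := mem_support_of_mem_vertexBoundary hA hu hd (fun x hx => (hRA x (hdR x hx)).1)
    ⟨a, ha, haz.trans (hzy.reachable.trans ⟨p⟩)⟩
  exact (hRA u (hdR u hud)).2 (mem_support_of_mem_vertexBoundary hA hu hc hcA ⟨a, ha, haz⟩)

lemma support_subset_vertexBoundary [Fintype V] [DecidableRel G.Adj]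
    (hdeg : ∀ v, 3 ≤ G.degree v)
    (hA : Maximal (fun B => (G.induce B).Connected ∧ G.HasReachableCycleOutside B) A)
    {v : V} {c : G.Walk v v} (hc : c.IsCycle) (hcA : ∀ x ∈ c.support, x ∉ A)
    (hreach : ∃ a ∈ A, G.Reachable a v) : ∀ z ∈ c.support, z ∈ G.vertexBoundary A := by
  classical
  intro z hz
  by_contra hzA
  obtain ⟨a, ha, hav⟩ := hreach
  have haz : G.Reachable a z := hav.trans ⟨c.takeUntil z hz⟩
  set c' := c.rotate z hz
  have hc'A : ∀ x ∈ c'.support, x ∉ A := fun x hx => hcA x ((c.mem_support_rotate_iff z hz).1 hx)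
  obtain ⟨y, hzy, hy₁, hy₂⟩ := exists_adj_ne_ne_of_three_le_degree (hdeg z) c'.snd c'.penultimate
  have hyA : y ∉ A := fun hyA => hzA ⟨hcA z hz, y, hyA, hzy.symm⟩
  obtain ⟨t, htc, htz, Q, hQ, hQA⟩ :=
    exists_isPath_to_support hdeg hA (hc.rotate hz) hc'A ⟨a, ha, haz⟩ hzy hyA
  have hzQ : z ∉ Q.support := fun h => htz ((hQA z h).2 c'.start_mem_support).symm
  refine not_vertexBoundary_subset_singleton hdeg hA (hcA z hz) htz.symm ha haz fun u hu => ?_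
  by_contra hut
  have huz : u ≠ z := by rintro rfl; exact hzA hu
  have huQ : u ∉ (cons hzy Q).support := by
    rw [support_cons, List.mem_cons]
    rintro (rfl | h)
    · exact huz rfl
    · exact hut ((hQA u h).2 ((c.mem_support_rotate_iff z hz).2
        (mem_support_of_mem_vertexBoundary hA hu hc hcA ⟨a, ha, hav⟩)))
  obtain ⟨w, d, hd, hud, hdsub⟩ := (hc.rotate hz).exists_isCycle_not_mem_support htc htz huz hut
    (hQ.cons hzQ) huQ (by simpa using hy₁) (by simpa using hy₂)
  refine hud (mem_support_of_mem_vertexBoundary hA hu hd (fun x hx => ?_) ⟨a, ha, ?_⟩)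
  · rcases hdsub x hx with h | h
    · exact hc'A x h
    · rw [support_cons, List.mem_cons] at h
      rcases h with rfl | h
      exacts [hcA x hz, (hQA x h).1]
  · rcases hdsub w d.start_mem_support with h | h
    · exact haz.trans ⟨c'.takeUntil w h⟩
    · exact haz.trans ⟨(cons hzy Q).takeUntil w h⟩

end Maximal

lemma hasDomKtModel_four_of_isCycle_subset_vertexBoundary {A : Set V}
    (hA : (G.induce A).Connected) {v : V} {c : G.Walk v v} (hc : c.IsCycle)
    (hcA : ∀ x ∈ c.support, x ∈ G.vertexBoundary A) : G.HasDomKtModel 4 := by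
  obtain ⟨d, hd, e, f, p, hvd, hde, hfv, hvp, hdp, hpc⟩ := hc.exists_edge_and_avoiding_walk
  have hnA : ∀ x ∈ c.support, x ∉ A := fun x hx => (hcA x hx).1
  have hdom : ∀ x ∈ c.support, ∃ a ∈ A, G.Adj x a := fun x hx =>
    let ⟨_, a, ha, hax⟩ := hcA x hx
    ⟨a, ha, hax.symm⟩
  refine ⟨![A, {x | x ∈ p.support}, {d}, {v}], ?_, ?_, ?_, ?_⟩
  · intro i
    fin_cases i
    exacts [Set.nonempty_coe_sort.1 hA.nonempty, ⟨e, p.start_mem_support⟩,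
      Set.singleton_nonempty d, Set.singleton_nonempty v]
  · have hpA : Disjoint A {x | x ∈ p.support} :=
      Set.disjoint_right.2 fun x hx => hnA x (hpc x hx)
    intro i j hij
    fin_cases i <;> fin_cases j <;>
      simp [hpA, hpA.symm, hnA d hd, hnA v c.start_mem_support, hvp, hdp, hvd.ne, hvd.ne'] at hij ⊢
  · intro i
    fin_cases i
    exacts [hA, p.connected_induce_support, connected_induce_singleton d,
      connected_induce_singleton v]
  · intro i j hij x hx
    fin_cases i <;> fin_cases j <;> simp at hij hx ⊢
    · exact hdom x (hpc x hx)
    · exact hdom x (hx ▸ hd)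
    · exact hdom x (hx ▸ c.start_mem_support)
    · exact ⟨e, p.start_mem_support, hx ▸ hde⟩
    · exact ⟨f, p.end_mem_support, hx ▸ hfv.symm⟩
    · exact hx ▸ hvd

end SimpleGraph

open SimpleGraph

/-- Every non-empty graph with minimum degree at least 3 contains a dominating K_4-model. -/
theorem hasDomK4Model_of_minDegree_ge_three {V : Type*} [Fintype V] [Nonempty V]
    (G : SimpleGraph V) [DecidableRel G.Adj] (h : ∀ v, 3 ≤ G.degree v) :
    G.HasDomKtModel 4 := by
  obtain ⟨w⟩ := ‹Nonempty V›
  obtain ⟨A, hA⟩ := Set.toFinite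
    {B : Set V | (G.induce B).Connected ∧ G.HasReachableCycleOutside B} |>.exists_maximal
    ⟨{w}, connected_induce_singleton w, hasReachableCycleOutside_singleton h w⟩
  obtain ⟨v, c, hc, hcA, hreach⟩ := hA.prop.2
  exact hasDomKtModel_four_of_isCycle_subset_vertexBoundary hA.prop.1 hc
    (support_subset_vertexBoundary h hA hc hcA hreach)
end

section
/- Every graph with no dominating K_4-model is 2-degenerate, and hence has chromatic number at most 3. -/
/-!
Suppose some nonempty vertex set `S` has minimum degree at least 3; take `S` minimal. Choose a
connected `B ⊆ S`, as large as possible, such that `S \ B` still contains a nonempty set of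
minimum degree at least 2 (a set containing a cycle), and let `Z ⊆ S \ B` be a minimal such
set; minimality makes `Z` 2-regular. Maximality of `B` forces every such set in `S \ B` to
contain each vertex `y` adjacent to `B`, since otherwise `B ∪ {y}` would do. If some `v ∈ Z`
had no neighbour in `B`, its third neighbour would lie in a component `D` of `S \ (B ∪ Z)`.
Either `D` is attached to `Z` only at `v`, and then has minimum degree 2 itself, or `D` together
with `Z` minus a suitable `y` adjacent to `B` spans at least as many edges as vertices; in both
cases we get a cycle avoiding a vertex adjacent to `B`. So all of `Z` is dominated by `B`. An
edge `ab` of `Z` together with a connected `T ⊆ Z` adjacent to both `a` and `b` then gives the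
dominating `K₄`-model `(B, T, {a}, {b})`. Greedy colouring along a 2-degenerate ordering uses
3 colours.
-/

open Finset

namespace SimpleGraph

variable {V : Type*} {G : SimpleGraph V}

lemma Connected.induce_insert_s7 [DecidableEq V] {A : Finset V}
    (hA : (G.induce (A : Set V)).Connected) {x y : V} (hx : x ∈ A) (hxy : G.Adj x y) :
    (G.induce (insert y A : Finset V)).Connected := by
  rw [coe_insert, Set.insert_eq, Set.union_comm]
  have hy : (G.induce {y}).Connected := by simp
  exact connected_induce_union hA.preconnected hy.preconnected hx (by simp) hxy

lemma exists_closed_connected_subset {X : Finset V} {w : V} (hw : w ∈ X) :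
    ∃ C ⊆ X, w ∈ C ∧ (G.induce (C : Set V)).Connected ∧
      ∀ x ∈ C, ∀ y ∈ X, G.Adj x y → y ∈ C := by
  classical
  obtain ⟨C, hC, hmax⟩ := exists_max_image
    {C ∈ X.powerset | w ∈ C ∧ (G.induce ((C : Finset V) : Set V)).Connected} card
    ⟨{w}, mem_filter.2 ⟨by simpa using hw, mem_singleton_self w, by
      rw [coe_singleton]
      simp⟩⟩
  simp only [mem_filter, mem_powerset] at hC hmax
  obtain ⟨hCX, hwC, hconn⟩ := hC
  refine ⟨C, hCX, hwC, hconn, fun x hx y hy hxy => ?_⟩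
  by_contra hyC
  have := hmax (insert y C)
    ⟨insert_subset hy hCX, mem_insert_of_mem hwC, hconn.induce_insert_s7 hx hxy⟩
  rw [card_insert_of_notMem hyC] at this
  omega

variable (G) [DecidableRel G.Adj]

def degreeIn (A : Finset V) (x : V) : ℕ := #{y ∈ A | G.Adj x y}

def degreeSum (A : Finset V) : ℕ := ∑ x ∈ A, G.degreeIn A x

def MinDegreeAtLeast (k : ℕ) (A : Finset V) : Prop := A.Nonempty ∧ ∀ x ∈ A, k ≤ G.degreeIn A x

variable {G}

lemma degreeIn_le_degreeIn_erase_add_one [DecidableEq V] (A : Finset V) (u x : V) :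
    G.degreeIn A x ≤ G.degreeIn (A.erase u) x + 1 := by
  have := pred_card_le_card_erase (s := {y ∈ A | G.Adj x y}) (a := u)
  rw [degreeIn, degreeIn, filter_erase]
  omega

lemma degreeIn_union_of_disjoint [DecidableEq V] {A B : Finset V} (h : Disjoint A B) (x : V) :
    G.degreeIn (A ∪ B) x = G.degreeIn A x + G.degreeIn B x := by
  rw [degreeIn, filter_union, card_union_of_disjoint (disjoint_filter_filter h)]
  rfl

lemma sum_degreeIn_comm (A B : Finset V) :
    ∑ x ∈ A, G.degreeIn B x = ∑ y ∈ B, G.degreeIn A y := by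
  simp only [degreeIn, card_filter]
  rw [sum_comm]
  simp only [G.adj_comm]

lemma degreeSum_union_of_disjoint [DecidableEq V] {A B : Finset V} (h : Disjoint A B) :
    G.degreeSum (A ∪ B) = G.degreeSum A + G.degreeSum B + 2 * ∑ x ∈ A, G.degreeIn B x := by
  simp only [degreeSum, sum_union h, degreeIn_union_of_disjoint h, sum_add_distrib]
  rw [sum_degreeIn_comm B A]
  ring

lemma degreeIn_erase_self [DecidableEq V] (A : Finset V) (x : V) :
    G.degreeIn (A.erase x) x = G.degreeIn A x := by
  rw [degreeIn, degreeIn, filter_erase, erase_eq_of_notMem (by simp)]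

lemma degreeSum_erase [DecidableEq V] {A : Finset V} {x : V} (hx : x ∈ A) :
    G.degreeSum A = G.degreeSum (A.erase x) + 2 * G.degreeIn A x := by
  have h := degreeSum_union_of_disjoint (G := G) (disjoint_singleton_right.2 (notMem_erase x A))
  rw [union_comm, ← insert_eq, insert_erase hx, sum_degreeIn_comm, sum_singleton,
    degreeIn_erase_self] at h
  have hx0 : G.degreeSum {x} = 0 := by simp [degreeSum, degreeIn]
  rw [h, hx0, add_zero]

lemma even_degreeSum [DecidableEq V] (A : Finset V) : Even (G.degreeSum A) := by
  induction A using Finset.induction_on with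
  | empty => simp [degreeSum]
  | insert x A hx ih =>
    rw [degreeSum_erase (mem_insert_self x A), erase_insert hx]
    exact ih.add (even_two_mul _)

lemma degreeIn_le_card_erase [DecidableEq V] (A : Finset V) (x : V) :
    G.degreeIn A x ≤ #(A.erase x) := by
  rw [← degreeIn_erase_self]
  exact card_filter_le _ _

lemma exists_minDegreeAtLeast_two_of_le_degreeSum [DecidableEq V] {A : Finset V}
    (hA : A.Nonempty) (h : 2 * #A ≤ G.degreeSum A) : ∃ W ⊆ A, G.MinDegreeAtLeast 2 W := by
  -- Deleting a vertex of degree at most 1 preserves `2 * #A ≤ degreeSum A`.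
  induction A using Finset.strongInduction with
  | H A ih =>
    by_cases hmin : ∀ x ∈ A, 2 ≤ G.degreeIn A x
    · exact ⟨A, subset_rfl, hA, hmin⟩
    push Not at hmin
    obtain ⟨x, hx, hdeg⟩ := hmin
    have hsum := degreeSum_erase (G := G) hx
    have hcard := card_erase_add_one hx
    have hle := degreeIn_le_card_erase (G := G) A x
    have hne : (A.erase x).Nonempty := by
      rw [nonempty_iff_ne_empty]
      intro he
      rw [he, card_empty] at hle
      rw [he, show G.degreeSum ∅ = 0 from sum_empty] at hsum
      omega
    obtain ⟨W, hW, hWmin⟩ := ih _ (erase_ssubset hx) hne (by omega)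
    exact ⟨W, hW.trans (erase_subset x A), hWmin⟩

lemma degree_induce_eq_degreeIn (A : Finset V) (x : A) :
    (G.induce (A : Set V)).degree x = G.degreeIn A x := by
  rw [← card_neighborFinset_eq_degree, degreeIn, ← card_map (Function.Embedding.subtype _)]
  congr 1
  ext y
  simp [and_comm]

lemma two_mul_card_le_degreeSum_add_two {A : Finset V} (hA : (G.induce (A : Set V)).Connected) :
    2 * #A ≤ G.degreeSum A + 2 := by
  have hcard := hA.card_vert_le_card_edgeSet_add_one
  have hsum := (G.induce (A : Set V)).sum_degrees_eq_twice_card_edges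
  simp only [degree_induce_eq_degreeIn] at hsum
  rw [Nat.card_coe_set_eq, Set.ncard_coe_finset, Nat.card_eq_fintype_card,
    ← edgeFinset_card] at hcard
  have hsum' : G.degreeSum A = 2 * #(G.induce (A : Set V)).edgeFinset := by
    rw [degreeSum, ← sum_coe_sort A]
    exact hsum
  omega

lemma degreeSum_erase_add_two_le_of_minimal [DecidableEq V] {Z : Finset V}
    (hZ : Minimal (G.MinDegreeAtLeast 2) Z) {x : V} (hx : x ∈ Z) :
    G.degreeSum (Z.erase x) + 2 ≤ 2 * #(Z.erase x) := by
  have hne : (Z.erase x).Nonempty := by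
    rw [← card_pos]
    have := hZ.prop.2 x hx
    have := G.degreeIn_le_card_erase Z x
    omega
  by_contra hlt
  -- by parity, the failure of the bound gives `2 * #(Z.erase x) ≤ degreeSum (Z.erase x)`
  obtain ⟨k, hk⟩ := G.even_degreeSum (Z.erase x)
  obtain ⟨W, hW, hWmin⟩ := G.exists_minDegreeAtLeast_two_of_le_degreeSum hne (by omega)
  have hZW := hZ.2 hWmin (hW.trans (erase_subset x Z))
  exact notMem_erase x Z (hW (hZW hx))

lemma degreeIn_eq_two_of_minimal {Z : Finset V}
    (hZ : Minimal (G.MinDegreeAtLeast 2) Z) {x : V} (hx : x ∈ Z) : G.degreeIn Z x = 2 := by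
  classical
  obtain ⟨hZne, hZdeg⟩ := hZ.prop
  -- At a vertex `m` of minimum degree `δ`, `#Z * δ ≤ degreeSum Z ≤ 2 * #Z - 4 + 2 * δ`;
  -- this forces `δ = 2` and then `degreeSum Z ≤ 2 * #Z`.
  obtain ⟨m, hm, hmin⟩ := exists_min_image Z (G.degreeIn Z) hZne
  have hsum := degreeSum_erase (G := G) hm
  have herase := G.degreeSum_erase_add_two_le_of_minimal hZ hm
  have hcard := card_erase_add_one hm
  have hlow : #Z * G.degreeIn Z m ≤ G.degreeSum Z := by
    simpa [degreeSum] using card_nsmul_le_sum Z (G.degreeIn Z) _ hmin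
  have hm2 := hZdeg m hm
  have hZ3 : 3 ≤ #Z := by
    have := G.degreeIn_le_card_erase Z m
    omega
  have hδ : G.degreeIn Z m = 2 := by nlinarith
  by_contra hx2
  have hlt : ∑ _y ∈ Z, 2 < G.degreeSum Z :=
    sum_lt_sum hZdeg ⟨x, hx, lt_of_le_of_ne (hZdeg x hx) (Ne.symm hx2)⟩
  rw [sum_const, smul_eq_mul] at hlt
  omega

lemma minDegreeAtLeast_erase [DecidableEq V] {A : Finset V} {u : V} {k : ℕ}
    (hne : (A.erase u).Nonempty) (h : ∀ x ∈ A.erase u, k + 1 ≤ G.degreeIn A x) :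
    G.MinDegreeAtLeast k (A.erase u) :=
  ⟨hne, fun x hx => by
    have := h x hx
    have := G.degreeIn_le_degreeIn_erase_add_one A u x
    omega⟩

lemma degreeIn_eq_of_forall_adj_mem {A B : Finset V} {x : V} (hAB : A ⊆ B)
    (h : ∀ y ∈ B, G.Adj x y → y ∈ A) : G.degreeIn A x = G.degreeIn B x :=
  congrArg card (Subset.antisymm (filter_subset_filter _ hAB)
    fun y hy => mem_filter.2 ⟨h y (mem_filter.1 hy).1 (mem_filter.1 hy).2, (mem_filter.1 hy).2⟩)

lemma nontrivial_of_forall_minDegreeAtLeast_two {R Y : Finset V}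
    (hdeg : ∀ x ∈ R, x ∉ Y → 3 ≤ G.degreeIn R x)
    (hcyc : ∀ W ⊆ R, G.MinDegreeAtLeast 2 W → Y ⊆ W)
    (hY : Y.Nonempty) {v : V} (hvR : v ∈ R) (hvY : v ∉ Y) : Y.Nontrivial := by
  classical
  obtain ⟨u, rfl⟩ | hY := hY.exists_eq_singleton_or_nontrivial
  · have hW : G.MinDegreeAtLeast 2 (R.erase u) :=
      G.minDegreeAtLeast_erase ⟨v, mem_erase.2 ⟨by simpa using hvY, hvR⟩⟩
        fun x hx => hdeg x (mem_of_mem_erase hx) (by simpa using ne_of_mem_erase hx)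
    exact absurd (hcyc _ (erase_subset u R) hW (mem_singleton_self u)) (notMem_erase u R)
  · exact hY

lemma minDegreeAtLeast_two_of_adj_mem_or_eq {R D : Finset V} {v : V}
    (hD : D.Nonempty) (hdeg : ∀ x ∈ D, 3 ≤ G.degreeIn R x)
    (hnbr : ∀ x ∈ D, ∀ y ∈ R, G.Adj x y → y ∈ D ∨ y = v) : G.MinDegreeAtLeast 2 D := by
  classical
  refine ⟨hD, fun x hx => ?_⟩
  have hsub : {y ∈ R | G.Adj x y} ⊆ insert v {y ∈ D | G.Adj x y} := by
    intro y hy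
    obtain ⟨hyR, hxy⟩ := mem_filter.1 hy
    rcases hnbr x hx y hyR hxy with hyD | rfl
    · exact mem_insert_of_mem (mem_filter.2 ⟨hyD, hxy⟩)
    · exact mem_insert_self y _
  have := (card_le_card hsub).trans (card_insert_le _ _)
  have h3 := hdeg x hx
  unfold degreeIn at h3 ⊢
  omega

lemma exists_minDegreeAtLeast_two_of_erase_union [DecidableEq V] {Z D : Finset V} {y u v : V}
    (hreg : ∀ z ∈ Z, G.degreeIn Z z = 2) (hy : y ∈ Z)
    (hD : (G.induce (D : Set V)).Connected) (hZD : Disjoint Z D)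
    (hu : u ∈ Z.erase y) (hv : v ∈ Z.erase y) (huv : u ≠ v)
    (huD : ∃ d ∈ D, G.Adj u d) (hvD : ∃ d ∈ D, G.Adj v d) :
    ∃ W ⊆ Z.erase y ∪ D, G.MinDegreeAtLeast 2 W := by
  -- `Z.erase y` spans `#Z - 2` edges and `D` at least `#D - 1`; the edges from `u` and `v`
  -- to `D` bring the total up to the number of vertices.
  have hXD : Disjoint (Z.erase y) D := disjoint_of_subset_left (erase_subset y Z) hZD
  have hZsum : G.degreeSum Z = 2 * #Z := by
    rw [degreeSum, sum_congr rfl hreg, sum_const, smul_eq_mul, mul_comm]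
  have hXsum := degreeSum_erase (G := G) hy
  rw [hreg y hy, hZsum] at hXsum
  have hXcard := card_erase_add_one hy
  have hDsum := G.two_mul_card_le_degreeSum_add_two hD
  have hpos : ∀ x, (∃ d ∈ D, G.Adj x d) → 1 ≤ G.degreeIn D x := fun x ⟨d, hd, hxd⟩ =>
    card_pos.2 ⟨d, mem_filter.2 ⟨hd, hxd⟩⟩
  have hcross : 2 ≤ ∑ x ∈ Z.erase y, G.degreeIn D x := by
    have := sum_le_sum_of_subset (f := G.degreeIn D)
      (insert_subset hu (singleton_subset_iff.2 hv))
    rw [sum_pair huv] at this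
    have := hpos u huD
    have := hpos v hvD
    omega
  refine G.exists_minDegreeAtLeast_two_of_le_degreeSum ⟨u, mem_union_left _ hu⟩ ?_
  rw [degreeSum_union_of_disjoint hXD, card_union_of_disjoint hXD]
  omega

lemma exists_adj_mem_sdiff_of_degreeIn_lt [DecidableEq V] {A B : Finset V} {v : V}
    (h : G.degreeIn A v < G.degreeIn B v) : ∃ w ∈ B \ A, G.Adj v w := by
  by_contra! hno
  refine h.not_ge (card_le_card fun y hy => ?_)
  obtain ⟨hyB, hvy⟩ := mem_filter.1 hy
  by_contra hyA
  exact hno y (mem_sdiff.2 ⟨hyB, fun hyA' => hyA (mem_filter.2 ⟨hyA', hvy⟩)⟩) hvy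

theorem subset_of_minimal_minDegreeAtLeast_two {R Y Z : Finset V}
    (hdeg : ∀ x ∈ R, x ∉ Y → 3 ≤ G.degreeIn R x)
    (hcyc : ∀ W ⊆ R, G.MinDegreeAtLeast 2 W → Y ⊆ W)
    (hY : Y.Nonempty) (hZR : Z ⊆ R) (hZ : Minimal (G.MinDegreeAtLeast 2) Z) : Z ⊆ Y := by
  classical
  intro v hvZ
  by_contra hvY
  have hYZ := hcyc Z hZR hZ.prop
  have hvR := hZR hvZ
  obtain ⟨w, hw, hvw⟩ : ∃ w ∈ R \ Z, G.Adj v w := by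
    refine G.exists_adj_mem_sdiff_of_degreeIn_lt ?_
    rw [G.degreeIn_eq_two_of_minimal hZ hvZ]
    exact hdeg v hvR hvY
  obtain ⟨D, hDX, hwD, hD, hDclosed⟩ := G.exists_closed_connected_subset hw
  have hDR : D ⊆ R := hDX.trans sdiff_subset
  have hZD : Disjoint Z D := Finset.disjoint_left.2 fun _ hz hzD => (mem_sdiff.1 (hDX hzD)).2 hz
  -- Either `D` is attached to a second vertex `u` of `Z`, and then `D` and `Z` contain a cycle
  -- avoiding a vertex of `Y`, or `D` hangs off `v` alone and has minimum degree 2 itself.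
  by_cases hattach : ∃ u ∈ Z, u ≠ v ∧ ∃ d ∈ D, G.Adj u d
  · obtain ⟨u, huZ, huv, huD⟩ := hattach
    obtain ⟨y, hyY, hyu⟩ :=
      (G.nontrivial_of_forall_minDegreeAtLeast_two hdeg hcyc hY hvR hvY).exists_ne u
    have hvy : v ≠ y := fun h => hvY (h ▸ hyY)
    obtain ⟨W, hW, hWmin⟩ := G.exists_minDegreeAtLeast_two_of_erase_union
      (fun z hz => G.degreeIn_eq_two_of_minimal hZ hz) (hYZ hyY) hD hZD
      (mem_erase.2 ⟨hyu.symm, huZ⟩) (mem_erase.2 ⟨hvy, hvZ⟩) huv huD ⟨w, hwD, hvw⟩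
    have hWR : W ⊆ R := hW.trans (union_subset ((erase_subset y Z).trans hZR) hDR)
    have hyW := hW (hcyc W hWR hWmin hyY)
    rcases mem_union.1 hyW with hyZ | hyD
    · exact notMem_erase y Z hyZ
    · exact Finset.disjoint_left.1 hZD (hYZ hyY) hyD
  · push Not at hattach
    have hDmin : G.MinDegreeAtLeast 2 D := by
      refine G.minDegreeAtLeast_two_of_adj_mem_or_eq (R := R) (v := v) ⟨w, hwD⟩
        (fun x hx => hdeg x (hDR hx) fun hxY => Finset.disjoint_left.1 hZD (hYZ hxY) hx)
        (fun x hx y hyR hxy => ?_)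
      by_cases hyZ : y ∈ Z
      · exact Or.inr (by_contra fun hyv => hattach y hyZ hyv x hx hxy.symm)
      · exact Or.inl (hDclosed x hx y (mem_sdiff.2 ⟨hyR, hyZ⟩) hxy)
    obtain ⟨y, hy⟩ := hY
    exact Finset.disjoint_left.1 hZD (hYZ hy) (hcyc D hDR hDmin hy)

lemma exists_connected_adj_mem_of_minDegreeAtLeast_two [DecidableEq V] {S : Finset V}
    (hS : G.MinDegreeAtLeast 3 S) :
    ∃ B ⊆ S, (G.induce (B : Set V)).Connected ∧ (∃ W ⊆ S \ B, G.MinDegreeAtLeast 2 W) ∧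
      ∀ W ⊆ S \ B, G.MinDegreeAtLeast 2 W → ∀ y ∈ S \ B, ∀ b ∈ B, G.Adj y b → y ∈ W := by
  classical
  obtain ⟨s, hs⟩ := hS.1
  have hSs : G.MinDegreeAtLeast 2 (S.erase s) := by
    refine G.minDegreeAtLeast_erase ?_ fun x hx => hS.2 x (mem_of_mem_erase hx)
    rw [← card_pos]
    have := hS.2 s hs
    have := G.degreeIn_le_card_erase S s
    omega
  obtain ⟨B, hB, hmax⟩ := exists_max_image
    {B ∈ S.powerset | (G.induce ((B : Finset V) : Set V)).Connected ∧
      ∃ W ⊆ S \ B, G.MinDegreeAtLeast 2 W} card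
    ⟨{s}, mem_filter.2 ⟨mem_powerset.2 (singleton_subset_iff.2 hs), by rw [coe_singleton]; simp,
      S.erase s, by rw [sdiff_singleton_eq_erase], hSs⟩⟩
  simp only [mem_filter, mem_powerset] at hB hmax
  obtain ⟨hBS, hBconn, hW⟩ := hB
  refine ⟨B, hBS, hBconn, hW, fun W hW hWmin y hy b hb hyb => ?_⟩
  -- otherwise `insert y B` would be a larger candidate
  by_contra hyW
  obtain ⟨hyS, hyB⟩ := mem_sdiff.1 hy
  have := hmax (insert y B) ⟨insert_subset hyS hBS, hBconn.induce_insert_s7 hb hyb.symm, W,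
    fun x hx => by
      obtain ⟨hxS, hxB⟩ := mem_sdiff.1 (hW hx)
      exact mem_sdiff.2 ⟨hxS, by simpa [hxB] using fun hxy : x = y => hyW (hxy ▸ hx)⟩, hWmin⟩
  rw [card_insert_of_notMem hyB] at this
  omega

theorem exists_connected_dominating_minDegreeAtLeast_two {S : Finset V}
    (hS : Minimal (G.MinDegreeAtLeast 3) S) :
    ∃ B Z : Finset V, (G.induce (B : Set V)).Connected ∧ Disjoint B Z ∧
      G.MinDegreeAtLeast 2 Z ∧ ∀ z ∈ Z, ∃ b ∈ B, G.Adj z b := by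
  classical
  obtain ⟨B, hBS, hB, ⟨W₀, hW₀, hW₀min⟩, hsep⟩ :=
    G.exists_connected_adj_mem_of_minDegreeAtLeast_two hS.prop
  set Y := {y ∈ S \ B | ∃ b ∈ B, G.Adj y b}
  have hY : Y.Nonempty := by
    -- otherwise `B` would be a smaller set of minimum degree at least 3
    by_contra hY
    simp only [Y, not_nonempty_iff_eq_empty, filter_eq_empty_iff, not_exists, not_and] at hY
    have hB3 : G.MinDegreeAtLeast 3 B := by
      refine ⟨Set.nonempty_coe_sort.1 hB.nonempty, fun b hb => ?_⟩
      rw [G.degreeIn_eq_of_forall_adj_mem hBS fun y hy hby => ?_]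
      · exact hS.prop.2 b (hBS hb)
      · by_contra hyB
        exact hY (mem_sdiff.2 ⟨hy, hyB⟩) b hb hby.symm
    obtain ⟨x, hx⟩ := hW₀min.1
    exact (mem_sdiff.1 (hW₀ hx)).2 (hS.2 hB3 hBS (mem_sdiff.1 (hW₀ hx)).1)
  have hdeg : ∀ x ∈ S \ B, x ∉ Y → 3 ≤ G.degreeIn (S \ B) x := by
    intro x hx hxY
    rw [G.degreeIn_eq_of_forall_adj_mem sdiff_subset fun y hy hxy => ?_]
    · exact hS.prop.2 x (mem_sdiff.1 hx).1
    · refine mem_sdiff.2 ⟨hy, fun hyB => hxY (mem_filter.2 ⟨hx, y, hyB, hxy⟩)⟩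
  obtain ⟨Z, hZW, hZ⟩ := exists_minimal_le_of_wellFoundedLT _ W₀ hW₀min
  have hZY := G.subset_of_minimal_minDegreeAtLeast_two hdeg
    (fun W hW hWmin y hy => by
      obtain ⟨hy, b, hb, hyb⟩ := mem_filter.1 hy
      exact hsep W hW hWmin y hy b hb hyb) hY (hZW.trans hW₀) hZ
  refine ⟨B, Z, hB, ?_, hZ.prop, fun z hz => (mem_filter.1 (hZY hz)).2⟩
  exact disjoint_of_subset_right (hZW.trans hW₀) disjoint_sdiff

lemma exists_adj_and_connected_of_minDegreeAtLeast_two {Z : Finset V}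
    (hZ : G.MinDegreeAtLeast 2 Z) :
    ∃ a ∈ Z, ∃ b ∈ Z, ∃ T ⊆ Z, a ∉ T ∧ b ∉ T ∧ G.Adj a b ∧ (G.induce (T : Set V)).Connected ∧
      (∃ t ∈ T, G.Adj a t) ∧ ∃ t ∈ T, G.Adj b t := by
  classical
  have hnbr : ∀ x ∈ Z, 1 < #{y ∈ Z | G.Adj x y} := fun x hx => hZ.2 x hx
  obtain ⟨a, ha⟩ := hZ.1
  obtain ⟨b, hb, c, hc, hbc⟩ := one_lt_card.1 (hnbr a ha)
  rw [mem_filter] at hb hc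
  obtain ⟨⟨a, b, T⟩, hT, hmax⟩ := exists_max_image
    {p ∈ Z ×ˢ Z ×ˢ Z.powerset | p.1 ∉ p.2.2 ∧ p.2.1 ∉ p.2.2 ∧ G.Adj p.1 p.2.1 ∧
      (G.induce ((p.2.2 : Finset V) : Set V)).Connected ∧ ∃ t ∈ p.2.2, G.Adj p.1 t}
    (fun p => #p.2.2)
    ⟨⟨a, b, {c}⟩, by
      simp only [mem_filter, mem_product, mem_powerset, singleton_subset_iff, mem_singleton,
        exists_eq_left]
      exact ⟨⟨ha, hb.1, hc.1⟩, fun h => G.irrefl (h ▸ hc.2), hbc, hb.2,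
        by rw [coe_singleton]; simp, hc.2⟩⟩
  simp only [mem_filter, mem_product, mem_powerset] at hT hmax
  -- If `b` had no neighbour in the largest such `T`, then a second neighbour `b'` of `b` would
  -- give the larger triple `(b, b', insert a T)`.
  obtain ⟨⟨haZ, hbZ, hTZ⟩, haT, hbT, hab, hT, hTa⟩ := hT
  refine ⟨a, haZ, b, hbZ, T, hTZ, haT, hbT, hab, hT, hTa, ?_⟩
  by_contra! hTb
  obtain ⟨b', hb', hb'a⟩ := exists_mem_ne (hnbr b hbZ) a
  obtain ⟨hb'Z, hbb'⟩ := mem_filter.1 hb'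
  obtain ⟨t, ht, hat⟩ := hTa
  have := hmax ⟨b, b', insert a T⟩ ⟨⟨hbZ, hb'Z, insert_subset haZ hTZ⟩,
    by simpa [hab.ne.symm] using hbT, by simpa [hb'a] using fun h => hTb b' h hbb',
    hbb', hT.induce_insert_s7 ht hat.symm, a, mem_insert_self a T, hab.symm⟩
  rw [card_insert_of_notMem haT] at this
  omega

theorem hasDomKtModel_four_of_dominated {B Z : Finset V}
    (hB : (G.induce (B : Set V)).Connected) (hBZ : Disjoint B Z) (hZ : G.MinDegreeAtLeast 2 Z)
    (hdom : ∀ z ∈ Z, ∃ b ∈ B, G.Adj z b) : G.HasDomKtModel 4 := by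
  obtain ⟨a, haZ, b, hbZ, T, hTZ, haT, hbT, hab, hT, ⟨t, htT, hat⟩, ⟨t', ht'T, hbt'⟩⟩ :=
    G.exists_adj_and_connected_of_minDegreeAtLeast_two hZ
  have haB : a ∉ B := fun h => Finset.disjoint_left.1 hBZ h haZ
  have hbB : b ∉ B := fun h => Finset.disjoint_left.1 hBZ h hbZ
  have hBT : Disjoint B T := disjoint_of_subset_right hTZ hBZ
  refine ⟨![(B : Set V), (T : Set V), {a}, {b}], ?_, ?_, ?_, ?_⟩
  · intro i
    fin_cases i
    exacts [Set.nonempty_coe_sort.1 hB.nonempty, ⟨t, htT⟩, Set.singleton_nonempty a,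
      Set.singleton_nonempty b]
  · intro i j hij
    fin_cases i <;> fin_cases j <;>
      simp [Set.disjoint_singleton_left, Set.disjoint_singleton_right, hab.ne, hab.ne', hBT,
        hBT.symm, haB, hbB, haT, hbT] at hij ⊢
  · intro i
    fin_cases i
    exacts [hB, hT, by simp, by simp]
  · intro i j hij v hv
    fin_cases i <;> fin_cases j <;> simp at hij hv ⊢
    · exact hdom v (hTZ hv)
    · exact hv ▸ hdom a haZ
    · exact hv ▸ hdom b hbZ
    · exact hv ▸ ⟨t, htT, hat⟩
    · exact hv ▸ ⟨t', ht'T, hbt'⟩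
    · exact hv ▸ hab.symm

theorem hasDomKtModel_four_of_minDegreeAtLeast_three {S : Finset V}
    (hS : G.MinDegreeAtLeast 3 S) : G.HasDomKtModel 4 := by
  classical
  obtain ⟨S', -, hS'⟩ := exists_minimal_le_of_wellFoundedLT _ S hS
  obtain ⟨B, Z, hB, hBZ, hZ, hdom⟩ := G.exists_connected_dominating_minDegreeAtLeast_two hS'
  exact G.hasDomKtModel_four_of_dominated hB hBZ hZ hdom

theorem colorable_of_forall_exists_degreeIn_le [Fintype V] {k : ℕ}
    (h : ∀ A : Finset V, A.Nonempty → ∃ v ∈ A, G.degreeIn A v ≤ k) : G.Colorable (k + 1) := by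
  classical
  suffices ∀ A : Finset V, ∃ c : V → Fin (k + 1), ∀ x ∈ A, ∀ y ∈ A, G.Adj x y → c x ≠ c y by
    obtain ⟨c, hc⟩ := this univ
    exact ⟨Coloring.mk c fun hxy => hc _ (mem_univ _) _ (mem_univ _) hxy⟩
  intro A
  induction A using Finset.strongInduction with
  | H A ih =>
    obtain rfl | hA := A.eq_empty_or_nonempty
    · exact ⟨0, by simp⟩
    obtain ⟨v, hv, hvk⟩ := h A hA
    obtain ⟨c, hc⟩ := ih _ (erase_ssubset hv)
    obtain ⟨col, -, hcol⟩ :=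
      exists_mem_notMem_of_card_lt_card (s := {y ∈ A | G.Adj v y}.image c) (t := univ)
        (by simpa using card_image_le.trans_lt (Nat.lt_succ_of_le hvk))
    have hfree : ∀ y ∈ A, G.Adj v y → col ≠ c y := fun y hy hvy h =>
      hcol (h ▸ mem_image_of_mem c (mem_filter.2 ⟨hy, hvy⟩))
    refine ⟨Function.update c v col, fun x hx y hy hxy => ?_⟩
    by_cases hxv : x = v
    · subst hxv
      rw [Function.update_self, Function.update_of_ne hxy.ne']
      exact hfree y hy hxy
    by_cases hyv : y = v
    · subst hyv
      rw [Function.update_self, Function.update_of_ne hxv]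
      exact (hfree x hx hxy.symm).symm
    rw [Function.update_of_ne hxv, Function.update_of_ne hyv]
    exact hc x (mem_erase.2 ⟨hxv, hx⟩) y (mem_erase.2 ⟨hyv, hy⟩) hxy

end SimpleGraph

/-- Every graph with no dominating K_4-model is 2-degenerate (every non-empty subgraph has a
vertex of degree at most 2 in that subgraph), and hence has chromatic number at most 3. -/
theorem degenerate_and_colourable_of_not_hasDomK4Model {V : Type*} [Fintype V]
    (G : SimpleGraph V) (h : ¬ G.HasDomKtModel 4) :
    (∀ s : Set V, s.Nonempty → ∃ v ∈ s, {u ∈ s | G.Adj v u}.ncard ≤ 2) ∧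
      G.chromaticNumber ≤ 3 := by
  classical
  have hdeg : ∀ A : Finset V, A.Nonempty → ∃ v ∈ A, G.degreeIn A v ≤ 2 := by
    intro A hA
    by_contra! hmin
    exact h (G.hasDomKtModel_four_of_minDegreeAtLeast_three ⟨hA, hmin⟩)
  refine ⟨fun s hs => ?_, (G.colorable_of_forall_exists_degreeIn_le hdeg).chromaticNumber_le⟩
  obtain ⟨v, hv, hle⟩ := hdeg s.toFinset (Set.toFinset_nonempty.2 hs)
  refine ⟨v, Set.mem_toFinset.1 hv, ?_⟩
  rw [Set.ncard_eq_toFinset_card']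
  convert hle using 2
  unfold SimpleGraph.degreeIn
  congr 1
  ext u
  simp
end

section
/- For t ≥ 2 and every non-empty graph G on n vertices with no dominating K_t-model, there is an integer h ≤ t − 1 and an induced subgraph of G on at least (n + h)/2 vertices whose chromatic number is at most h. In particular, the independence number satisfies α(G) ≥ (n + t − 1)/(2t − 2). -/
namespace SimpleGraph

open Set

variable {V : Type*} {G : SimpleGraph V}

def HasDomKtModelIn (G : SimpleGraph V) (t : ℕ) (A : Set V) : Prop :=
  ∃ T : Fin t → Set V, G.IsDomKtModel t T ∧ ∀ i, T i ⊆ A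

theorem hasDomKtModelIn_univ {t : ℕ} : G.HasDomKtModelIn t univ ↔ G.HasDomKtModel t :=
  ⟨fun ⟨T, hT, _⟩ => ⟨T, hT⟩, fun ⟨T, hT⟩ => ⟨T, hT, fun _ => subset_univ _⟩⟩

theorem HasDomKtModelIn.mono {t : ℕ} {A B : Set V} (h : G.HasDomKtModelIn t A) (hAB : A ⊆ B) :
    G.HasDomKtModelIn t B :=
  let ⟨T, hT, hTA⟩ := h
  ⟨T, hT, fun i => (hTA i).trans hAB⟩

theorem IsDomKtModel.castLE {s t : ℕ} {T : Fin t → Set V} (hT : G.IsDomKtModel t T)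
    (hst : s ≤ t) : G.IsDomKtModel s (T ∘ Fin.castLE hst) := by
  obtain ⟨hne, hdisj, hconn, hdom⟩ := hT
  exact ⟨fun _ => hne _, fun _ _ hij => hdisj ((Fin.castLE_injective hst).ne hij),
    fun _ => hconn _, fun _ _ hij => hdom _ _ hij⟩

theorem HasDomKtModelIn.of_le {s t : ℕ} {A : Set V} (h : G.HasDomKtModelIn t A) (hst : s ≤ t) :
    G.HasDomKtModelIn s A :=
  let ⟨T, hT, hTA⟩ := h
  ⟨T ∘ Fin.castLE hst, hT.castLE hst, fun _ => hTA _⟩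

theorem hasDomKtModelIn_one_of_connected {A : Set V} (hA : A.Nonempty)
    (hconn : (G.induce A).Connected) : G.HasDomKtModelIn 1 A :=
  ⟨fun _ => A, ⟨fun _ => hA, fun i j hij => (hij (Subsingleton.elim i j)).elim,
    fun _ => hconn, fun i j hij => (hij.ne (Subsingleton.elim i j)).elim⟩, fun _ => subset_rfl⟩

theorem IsDomKtModel.cons {t : ℕ} {T : Fin t → Set V} (hT : G.IsDomKtModel t T) {D : Set V}
    (hD : D.Nonempty) (hDconn : (G.induce D).Connected) (hdisj : ∀ i, Disjoint D (T i))
    (hdom : ∀ i, ∀ v ∈ T i, ∃ u ∈ D, G.Adj v u) :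
    G.IsDomKtModel (t + 1) (Fin.cons D T) := by
  obtain ⟨hne, hTdisj, hconn, hTdom⟩ := hT
  refine ⟨Fin.cases hD hne, ?_, Fin.cases hDconn hconn, ?_⟩
  · intro i j hij
    cases i using Fin.cases <;> cases j using Fin.cases
    · exact (hij rfl).elim
    · exact hdisj _
    · exact (hdisj _).symm
    · exact hTdisj (fun h => hij (congrArg _ h))
  · intro i j hij
    cases i using Fin.cases <;> cases j using Fin.cases
    · exact hij.false.elim
    · exact hdom _
    · exact absurd hij (Fin.succ_pos _).not_gt
    · exact hTdom _ _ (Fin.succ_lt_succ_iff.mp hij)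

theorem HasDomKtModelIn.cons {t : ℕ} {A D : Set V} (h : G.HasDomKtModelIn t (A \ D))
    (hDA : D ⊆ A) (hD : D.Nonempty) (hDconn : (G.induce D).Connected)
    (hdom : ∀ v ∈ A \ D, ∃ u ∈ D, G.Adj v u) : G.HasDomKtModelIn (t + 1) A := by
  obtain ⟨T, hT, hTA⟩ := h
  refine ⟨Fin.cons D T, hT.cons hD hDconn (fun i => ?_) (fun i v hv => hdom v (hTA i hv)), ?_⟩
  · exact disjoint_sdiff_right.mono_right (hTA i)
  · exact Fin.cases hDA fun i => (hTA i).trans sdiff_subset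

theorem colorable_induce_union {s₁ s₂ : Set V} {n : ℕ} (C₁ : (G.induce s₁).Coloring (Fin n))
    (C₂ : (G.induce s₂).Coloring (Fin n))
    (h : ∀ x (hx : x ∈ s₁) y (hy : y ∈ s₂), G.Adj x y → C₁ ⟨x, hx⟩ ≠ C₂ ⟨y, hy⟩) :
    (G.induce (s₁ ∪ s₂)).Colorable n := by
  classical
  refine ⟨Coloring.mk (fun v => if hv : v.1 ∈ s₁ then C₁ ⟨v, hv⟩
    else C₂ ⟨v, v.2.resolve_left hv⟩) ?_⟩
  rintro ⟨a, ha⟩ ⟨b, hb⟩ (hab : G.Adj a b)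
  by_cases ha₁ : a ∈ s₁ <;> by_cases hb₁ : b ∈ s₁ <;> simp only [ha₁, hb₁, dite_true, dite_false]
  · exact C₁.valid (show (G.induce s₁).Adj ⟨a, ha₁⟩ ⟨b, hb₁⟩ from hab)
  · exact h a ha₁ b _ hab
  · exact (h b hb₁ a _ hab.symm).symm
  · exact C₂.valid (show (G.induce s₂).Adj ⟨a, _⟩ ⟨b, _⟩ from hab)

def IsIndepSet.coloringConst {I : Set V} (hI : G.IsIndepSet I) {α : Type*} (c : α) :
    (G.induce I).Coloring α :=
  Coloring.mk (fun _ => c) fun {a b} hab => (hI a.2 b.2 (fun h => hab.ne (Subtype.ext h)) hab).elim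

theorem Colorable.exists_isIndepSet_card_le_mul {s : Set V} [Finite V] {k : ℕ}
    (hcol : (G.induce s).Colorable k) :
    ∃ I ⊆ s, G.IsIndepSet I ∧ s.ncard ≤ k * I.ncard := by
  classical
  have := Fintype.ofFinite V
  obtain ⟨C⟩ := hcol
  rcases isEmpty_or_nonempty (Fin k) with hk | hk
  · obtain rfl : s = ∅ := isEmpty_coe_sort.mp ⟨fun v => hk.false (C v)⟩
    exact ⟨∅, subset_rfl, by simp, by simp⟩
  have hk0 : (k : ℚ) ≠ 0 := by simpa using Fin.pos_iff_nonempty.mpr hk |>.ne'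
  obtain ⟨c, hc⟩ := Fintype.exists_le_card_fiber_of_nsmul_le_card (b := (s.ncard : ℚ) / k) C
    (by rw [nsmul_eq_mul, Fintype.card_fin, mul_div_cancel₀ _ hk0, ← Nat.card_eq_fintype_card,
      Nat.card_coe_set_eq])
  refine ⟨Subtype.val '' C.colorClass c, Subtype.coe_image_subset _ _, ?_, ?_⟩
  · rintro _ ⟨x, hx, rfl⟩ _ ⟨y, hy, rfl⟩ hne
    exact C.not_adj_of_mem_colorClass hx hy
  · rw [div_le_iff₀' (by positivity)] at hc
    rw [ncard_image_of_injective _ Subtype.val_injective, Coloring.colorClass,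
      ncard_eq_toFinset_card' {v | C v = c}, toFinset_ofPred]
    exact_mod_cast hc

theorem exists_adj_of_induce_connected {A S : Set V} (hA : (G.induce A).Connected) {a b : V}
    (ha : a ∈ A) (haS : a ∈ S) (hb : b ∈ A) (hbS : b ∉ S) :
    ∃ u ∈ A, u ∈ S ∧ ∃ x ∈ A, x ∉ S ∧ G.Adj u x := by
  obtain ⟨p⟩ := hA.preconnected ⟨a, ha⟩ ⟨b, hb⟩
  obtain ⟨d, -, hd₁, hd₂⟩ := p.exists_boundary_dart {v | v.1 ∈ S} haS hbS
  exact ⟨d.fst, d.fst.2, hd₁, d.snd, d.snd.2, hd₂, d.adj⟩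

theorem exists_separation_of_not_connected {A : Set V} (hA : A.Nonempty)
    (hconn : ¬ (G.induce A).Connected) :
    ∃ B ⊂ A, B.Nonempty ∧ ∀ x ∈ B, ∀ y ∈ A \ B, ¬ G.Adj x y := by
  have : Nonempty A := hA.to_subtype
  obtain ⟨a, b, hab⟩ : ∃ a b, ¬ (G.induce A).Reachable a b := by
    simpa [connected_iff, Preconnected] using hconn
  refine ⟨Subtype.val '' {y | (G.induce A).Reachable a y},
    (Subtype.coe_image_subset _ _).ssubset_of_ne ?_, ⟨a, a, Reachable.refl _, rfl⟩, ?_⟩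
  · intro h
    obtain ⟨y, hy, hyb⟩ := h.ge b.2
    exact hab (Subtype.ext hyb ▸ hy)
  · rintro _ ⟨y, hy, rfl⟩ z ⟨hzA, hzB⟩ hyz
    exact hzB ⟨⟨z, hzA⟩, hy.trans (Adj.reachable (G := G.induce A) hyz), rfl⟩

structure IsIndepMajority (G : SimpleGraph V) (D I : Set V) : Prop where
  subset : I ⊆ D
  connected : (G.induce D).Connected
  isIndepSet : G.IsIndepSet I
  ncard_lt : D.ncard < 2 * I.ncard

theorem isIndepMajority_singleton (v : V) : G.IsIndepMajority {v} {v} :=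
  ⟨subset_rfl, by simp only [induce_singleton_eq_top]; exact .of_subsingleton,
    pairwise_singleton _ _, by simp⟩

theorem IsIndepMajority.nonempty [Finite V] {D I : Set V} (h : G.IsIndepMajority D I) :
    I.Nonempty :=
  nonempty_of_ncard_ne_zero (by have := h.ncard_lt; omega)

theorem IsIndepMajority.union_pair [Finite V] {D I : Set V} (h : G.IsIndepMajority D I)
    {u x d : V} (hd : d ∈ D) (hxd : G.Adj x d) (hux : G.Adj u x) (hu : ∀ w ∈ D, ¬ G.Adj u w)
    (hxD : x ∉ D) (huD : u ∉ D) : G.IsIndepMajority ({u, x} ∪ D) (insert u I) where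
  subset := insert_subset (Or.inl (mem_insert _ _)) (h.subset.trans subset_union_right)
  connected := connected_induce_union (induce_pair_connected_of_adj hux).preconnected
    h.connected.preconnected (by simp) hd hxd
  isIndepSet := h.isIndepSet.insert fun w hw _ =>
    ⟨hu w (h.subset hw), fun hwu => hu w (h.subset hw) hwu.symm⟩
  ncard_lt := by
    have hdisj : Disjoint {u, x} D := by simp [disjoint_insert_left, hxD, huD]
    rw [ncard_union_eq hdisj, ncard_pair hux.ne,
      ncard_insert_of_notMem fun hu' => huD (h.subset hu')]
    have := h.ncard_lt
    omega

theorem exists_isIndepMajority_dominating [Finite V] {A : Set V} (hA : A.Nonempty)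
    (hconn : (G.induce A).Connected) :
    ∃ D I, G.IsIndepMajority D I ∧ D ⊆ A ∧ ∀ v ∈ A \ D, ∃ w ∈ D, G.Adj v w := by
  obtain ⟨v, hv⟩ := hA
  obtain ⟨⟨D, I⟩, ⟨hDI, hDA⟩, hmax⟩ :=
    exists_max_image {p : Set V × Set V | G.IsIndepMajority p.1 p.2 ∧ p.1 ⊆ A}
      (fun p => p.1.ncard) (toFinite _)
      ⟨({v}, {v}), isIndepMajority_singleton v, singleton_subset_iff.mpr hv⟩
  refine ⟨D, I, hDI, hDA, ?_⟩
  by_contra! hund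
  obtain ⟨a, ⟨haA, haD⟩, ha⟩ := hund
  obtain ⟨d, hdI⟩ := hDI.nonempty
  have hdD := hDI.subset hdI
  -- an undominated `u` next to a dominated `x ∉ D`: adding both keeps `D` connected and
  -- `insert u I` independent
  obtain ⟨u, huA, ⟨huD, hu⟩, x, hxA, hx, hux⟩ :=
    exists_adj_of_induce_connected (S := {v | v ∉ D ∧ ∀ w ∈ D, ¬ G.Adj v w}) hconn haA ⟨haD, ha⟩
      (hDA hdD) (fun h => h.1 hdD)
  have hxD : x ∉ D := fun hxD => hu x hxD hux
  obtain ⟨d', hd'D, hxd'⟩ : ∃ w ∈ D, G.Adj x w := by simpa [hxD] using hx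
  have hbig := hmax ({u, x} ∪ D, insert u I)
    ⟨hDI.union_pair hd'D hxd' hux hu hxD huD,
      union_subset (insert_subset huA (singleton_subset_iff.mpr hxA)) hDA⟩
  have hdisj : Disjoint {u, x} D := by simp [disjoint_insert_left, hxD, huD]
  simp only [ncard_union_eq hdisj, ncard_pair hux.ne] at hbig
  omega

def HasLargeColorableSubset (G : SimpleGraph V) (t : ℕ) (A : Set V) : Prop :=
  ∃ k, 1 ≤ k ∧ k < t ∧ ∃ s ⊆ A, A.ncard + k ≤ 2 * s.ncard ∧ (G.induce s).Colorable k

theorem IsIndepMajority.hasLargeColorableSubset {D I : Set V} (h : G.IsIndepMajority D I)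
    {t : ℕ} (ht : 2 ≤ t) : G.HasLargeColorableSubset t D :=
  ⟨1, le_rfl, ht, I, h.subset, h.ncard_lt, ⟨h.isIndepSet.coloringConst 0⟩⟩

theorem HasLargeColorableSubset.union [Finite V] {t : ℕ} {B C : Set V}
    (hB : G.HasLargeColorableSubset t B) (hC : G.HasLargeColorableSubset t C)
    (hBC : Disjoint B C) (hadj : ∀ x ∈ B, ∀ y ∈ C, ¬ G.Adj x y) :
    G.HasLargeColorableSubset t (B ∪ C) := by
  obtain ⟨k₁, hk₁, hk₁t, s₁, hs₁B, hs₁, hcol₁⟩ := hB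
  obtain ⟨k₂, hk₂, hk₂t, s₂, hs₂C, hs₂, hcol₂⟩ := hC
  obtain ⟨C₁⟩ := hcol₁.mono (le_max_left k₁ k₂)
  obtain ⟨C₂⟩ := hcol₂.mono (le_max_right k₁ k₂)
  refine ⟨max k₁ k₂, hk₁.trans (le_max_left _ _), max_lt hk₁t hk₂t, s₁ ∪ s₂,
    union_subset_union hs₁B hs₂C, ?_,
    colorable_induce_union C₁ C₂ fun x hx y hy hxy => (hadj x (hs₁B hx) y (hs₂C hy) hxy).elim⟩
  rw [ncard_union_eq hBC, ncard_union_eq (hBC.mono hs₁B hs₂C)]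
  omega

theorem HasLargeColorableSubset.of_isIndepMajority_sdiff [Finite V] {t : ℕ} {A D I : Set V}
    (h : G.HasLargeColorableSubset t (A \ D)) (hDI : G.IsIndepMajority D I) (hDA : D ⊆ A) :
    G.HasLargeColorableSubset (t + 1) A := by
  obtain ⟨k, hk, hkt, s, hsA, hs, ⟨C⟩⟩ := h
  refine ⟨k + 1, by omega, by omega, s ∪ I, union_subset (hsA.trans sdiff_subset)
    (hDI.subset.trans hDA), ?_, colorable_induce_union (recolorOfEmbedding _ Fin.castSuccEmb C)
      (hDI.isIndepSet.coloringConst (Fin.last k)) fun x _ y _ _ => (Fin.castSucc_lt_last _).ne⟩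
  rw [ncard_union_eq (disjoint_sdiff_left.mono hsA hDI.subset),
    ← ncard_sdiff_add_ncard_of_subset hDA]
  have := hDI.ncard_lt
  omega

theorem hasLargeColorableSubset_of_not_hasDomKtModelIn [Finite V] {t : ℕ} {A : Set V}
    (hA : A.Nonempty) (h : ¬ G.HasDomKtModelIn t A) : G.HasLargeColorableSubset t A := by
  induction hn : A.ncard using Nat.strong_induction_on generalizing A t with
  | _ n ih =>
  subst hn
  by_cases hconn : (G.induce A).Connected
  · have ht : 2 ≤ t := by
      by_contra! ht
      exact h ((hasDomKtModelIn_one_of_connected hA hconn).of_le (by omega))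
    obtain ⟨D, I, hDI, hDA, hdom⟩ := exists_isIndepMajority_dominating hA hconn
    rcases (A \ D).eq_empty_or_nonempty with hAD | hAD
    · rw [← hDA.antisymm (sdiff_eq_empty.mp hAD)]
      exact hDI.hasLargeColorableSubset ht
    obtain ⟨t, rfl⟩ : ∃ t', t = t' + 1 := ⟨t - 1, by omega⟩
    have hD : D.Nonempty := hDI.nonempty.mono hDI.subset
    refine (ih _ (ncard_lt_ncard (hDA.sdiff_ssubset_of_nonempty hD)) hAD
      (fun hm => h (hm.cons hDA hD hDI.connected hdom)) rfl).of_isIndepMajority_sdiff hDI hDA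
  · obtain ⟨B, hBA, hB, hcross⟩ := exists_separation_of_not_connected hA hconn
    have hunion := (ih _ (ncard_lt_ncard hBA) hB (fun hm => h (hm.mono hBA.subset)) rfl).union
      (ih _ (ncard_lt_ncard (hBA.subset.sdiff_ssubset_of_nonempty hB)) (nonempty_of_ssubset hBA)
        (fun hm => h (hm.mono sdiff_subset)) rfl) disjoint_sdiff_right hcross
    rwa [union_sdiff_cancel hBA.subset] at hunion

end SimpleGraph

theorem big_colourable_induced_subgraph_of_not_hasDomKtModel_general {V : Type*} [Fintype V]
    [Nonempty V] (G : SimpleGraph V) (t : ℕ) (h : ¬ G.HasDomKtModel t) :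
    (∃ h' : ℕ, h' ≤ t - 1 ∧ ∃ s : Set V,
      ((Fintype.card V : ℝ) + h') / 2 ≤ s.ncard ∧
      (G.induce s).chromaticNumber ≤ (h' : ℕ∞)) ∧
    ∃ I : Set V, (∀ u ∈ I, ∀ w ∈ I, u ≠ w → ¬ G.Adj u w) ∧
      ((Fintype.card V : ℝ) + t - 1) / (2 * t - 2) ≤ I.ncard := by
  obtain ⟨k, hk, hkt, s, -, hs, hcol⟩ :=
    G.hasLargeColorableSubset_of_not_hasDomKtModelIn Set.univ_nonempty
      (G.hasDomKtModelIn_univ.not.mpr h)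
  rw [Set.ncard_univ, Nat.card_eq_fintype_card] at hs
  obtain ⟨I, -, hI, hsI⟩ := hcol.exists_isIndepSet_card_le_mul
  have hs' : (Fintype.card V : ℝ) + k ≤ 2 * s.ncard := by exact_mod_cast hs
  refine ⟨⟨k, by omega, s, by linarith, hcol.chromaticNumber_le⟩, I, hI, ?_⟩
  have hsI' : (s.ncard : ℝ) ≤ k * I.ncard := by exact_mod_cast hsI
  have hk' : (1 : ℝ) ≤ k := by exact_mod_cast hk
  have hkt' : (k : ℝ) + 1 ≤ t := by exact_mod_cast hkt
  have hI1 : (1 : ℝ) ≤ 2 * I.ncard := by nlinarith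
  rw [div_le_iff₀ (by linarith)]
  -- `2|I|(t - 1) = 2k|I| + 2|I|(t - 1 - k) ≥ (n + k) + (t - 1 - k)`
  nlinarith [mul_nonneg (by linarith : (0 : ℝ) ≤ t - 1 - k)
    (by linarith : (0 : ℝ) ≤ 2 * I.ncard - 1)]

/-- For t ≥ 2 and every non-empty n-vertex graph G with no dominating K_t-model, there is an
integer h ≤ t - 1 and an induced subgraph of G on at least (n + h)/2 vertices with chromatic
number at most h.  In particular α(G) ≥ (n + t - 1)/(2t - 2). -/
theorem big_colourable_induced_subgraph_of_not_hasDomKtModel {V : Type*} [Fintype V]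
    [Nonempty V] (G : SimpleGraph V) (t : ℕ) (ht : 2 ≤ t) (h : ¬ G.HasDomKtModel t) :
    (∃ h' : ℕ, h' ≤ t - 1 ∧ ∃ s : Set V,
      ((Fintype.card V : ℝ) + h') / 2 ≤ s.ncard ∧
      (G.induce s).chromaticNumber ≤ (h' : ℕ∞)) ∧
    ∃ I : Set V, (∀ u ∈ I, ∀ w ∈ I, u ≠ w → ¬ G.Adj u w) ∧
      ((Fintype.card V : ℝ) + t - 1) / (2 * t - 2) ≤ I.ncard :=
  big_colourable_induced_subgraph_of_not_hasDomKtModel_general G t h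
end

section
/- Every connected graph G with n vertices and minimum degree δ > ln(2n) has a connected dominating set on at most 6n·ln(2n)/δ vertices. -/
/-!
Pick dominating vertices greedily: averaging over all `n` vertices, some closed neighbourhood
(of size at least `δ + 1`) contains a `(δ + 1) / n` fraction of the vertices not yet dominated,
so after `t` rounds at most `n (1 - (δ + 1) / n) ^ t ≤ n e ^ (-(δ + 1) t / n)` remain, which is
below `1` for `t = ⌈n ln (2n) / (δ + 1)⌉`. In a connected graph, a dominating set `D` becomes
connected by adding at most two vertices per element: if a connected `S` misses part of `D`, a
walk of length at most `3` joins `S` to `D \ S`, because a vertex just outside the closed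
neighbourhood of `S` is dominated by a vertex outside `S`. This gives at most
`3 ⌈n ln (2n) / (δ + 1)⌉ ≤ 6 n ln (2n) / δ` vertices.
-/

open Finset

theorem mul_sub_pow_lt_pow {n k : ℝ} (hn : 0 < n) (hkn : k ≤ n) {t : ℕ}
    (h : n * Real.log n < k * t) : n * (n - k) ^ t < n ^ t := by
  have hpow : (n - k) ^ t ≤ n ^ t * Real.exp (-(k * t / n)) := by
    calc (n - k) ^ t = n ^ t * (1 - k / n) ^ t := by
          rw [← mul_pow, mul_one_sub, mul_div_cancel₀ k hn.ne']
      _ ≤ n ^ t * Real.exp (-(k / n)) ^ t := by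
          gcongr
          · exact sub_nonneg.mpr ((div_le_one hn).mpr hkn)
          · exact Real.one_sub_le_exp_neg _
      _ = n ^ t * Real.exp (-(k * t / n)) := by
          rw [← Real.exp_nat_mul]
          ring_nf
  have hexp : n * Real.exp (-(k * t / n)) < 1 := by
    rw [← Real.exp_log hn, ← Real.exp_add, Real.exp_lt_one_iff, Real.exp_log hn,
      add_neg_lt_iff_lt_add, zero_add, lt_div_iff₀ hn, mul_comm]
    exact h
  calc n * (n - k) ^ t ≤ n * (n ^ t * Real.exp (-(k * t / n))) := by gcongr
    _ = n ^ t * (n * Real.exp (-(k * t / n))) := by ring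
    _ < n ^ t * 1 := by gcongr
    _ = n ^ t := mul_one _

namespace SimpleGraph

variable {V : Type*} (G : SimpleGraph V)

def IsDominating (D : Set V) : Prop :=
  ∀ v, v ∉ D → ∃ u ∈ D, G.Adj v u

variable {G}

theorem IsDominating.mono {D C : Set V} (hD : G.IsDominating D) (hDC : D ⊆ C) :
    G.IsDominating C := by
  intro v hv
  obtain ⟨u, hu, hvu⟩ := hD v fun h => hv (hDC h)
  exact ⟨u, hDC hu, hvu⟩

theorem IsDominating.nonempty [Nonempty V] {D : Set V} (hD : G.IsDominating D) : D.Nonempty := by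
  obtain ⟨v⟩ := ‹Nonempty V›
  by_cases hv : v ∈ D
  · exact ⟨v, hv⟩
  · obtain ⟨u, hu, -⟩ := hD v hv
    exact ⟨u, hu⟩

section Greedy

variable [Fintype V] [DecidableEq V] [DecidableRel G.Adj]

variable (G) in
def undominated (D : Finset V) : Finset V :=
  {v | ∀ u ∈ D, ¬(v = u ∨ G.Adj v u)}

theorem undominated_empty : G.undominated ∅ = univ := by
  simp [undominated]

theorem undominated_insert (v : V) (D : Finset V) :
    G.undominated (insert v D) = {w ∈ G.undominated D | ¬(w = v ∨ G.Adj w v)} := by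
  simp only [undominated, filter_filter, forall_mem_insert]
  exact filter_congr fun _ _ => and_comm

theorem isDominating_of_undominated_eq_empty {D : Finset V} (hD : G.undominated D = ∅) :
    G.IsDominating D := by
  intro v hv
  have : v ∉ G.undominated D := hD ▸ notMem_empty v
  simp only [undominated, mem_filter, mem_univ, true_and, not_forall, not_not] at this
  obtain ⟨u, hu, rfl | hvu⟩ := this
  exacts [absurd hu hv, ⟨u, hu, hvu⟩]

/-- Double counting: the closed neighbourhoods of all vertices cover each `u ∈ U` exactly
`degree u + 1 ≥ minDegree + 1` times. -/
theorem exists_minDegree_add_one_mul_card_le {U : Finset V} (hU : U.Nonempty) :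
    ∃ v, (G.minDegree + 1) * #U ≤ Fintype.card V * #{w ∈ U | w = v ∨ G.Adj w v} := by
  have hclosed (u : V) : #{v | u = v ∨ G.Adj u v} = G.degree u + 1 := by
    rw [← card_neighborFinset_eq_degree,
      ← card_insert_of_notMem (notMem_neighborFinset_self G u)]
    congr 1
    ext v
    simp [eq_comm]
  have hsum : ∑ v, #{w ∈ U | w = v ∨ G.Adj w v} = ∑ u ∈ U, (G.degree u + 1) := by
    simp only [card_filter, ← hclosed]
    exact sum_comm
  have hle : ∑ _v : V, (G.minDegree + 1) * #U ≤
      ∑ v, Fintype.card V * #{w ∈ U | w = v ∨ G.Adj w v} := by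
    rw [sum_const, card_univ, smul_eq_mul, ← mul_sum, hsum]
    gcongr
    calc (G.minDegree + 1) * #U = ∑ _u ∈ U, (G.minDegree + 1) := by
          rw [sum_const, smul_eq_mul, mul_comm]
      _ ≤ ∑ u ∈ U, (G.degree u + 1) := by
          gcongr with u
          exact G.minDegree_le_degree u
  obtain ⟨u₀, -⟩ := hU
  obtain ⟨v, -, hv⟩ := exists_le_of_sum_le ⟨u₀, mem_univ u₀⟩ hle
  exact ⟨v, hv⟩

theorem exists_card_le_pow_mul_card_undominated_le (t : ℕ) :
    ∃ D : Finset V, #D ≤ t ∧ Fintype.card V ^ t * #(G.undominated D) ≤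
      (Fintype.card V - (G.minDegree + 1)) ^ t * Fintype.card V := by
  set n := Fintype.card V
  set m := n - (G.minDegree + 1)
  induction t with
  | zero => exact ⟨∅, by simp, by simp [undominated_empty, n]⟩
  | succ t ih =>
    obtain ⟨D, hDt, hD⟩ := ih
    set U := G.undominated D
    rcases U.eq_empty_or_nonempty with hU | hU
    · exact ⟨D, by omega, by simp [U, hU]⟩
    obtain ⟨v, hv⟩ : ∃ v, (G.minDegree + 1) * #U ≤ n * #{w ∈ U | w = v ∨ G.Adj w v} :=
      G.exists_minDegree_add_one_mul_card_le hU
    refine ⟨insert v D, (card_insert_le v D).trans (by omega), ?_⟩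
    have hstep : n * #{w ∈ U | ¬(w = v ∨ G.Adj w v)} ≤ m * #U := by
      have hsplit := congrArg (n * ·)
        (card_filter_add_card_filter_not (s := U) fun w => w = v ∨ G.Adj w v)
      simp only [mul_add] at hsplit
      rw [Nat.sub_mul]
      omega
    rw [undominated_insert]
    calc n ^ (t + 1) * #{w ∈ U | ¬(w = v ∨ G.Adj w v)}
        = n ^ t * (n * #{w ∈ U | ¬(w = v ∨ G.Adj w v)}) := by ring
      _ ≤ n ^ t * (m * #U) := by gcongr
      _ = m * (n ^ t * #U) := by ring
      _ ≤ m * (m ^ t * n) := by gcongr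
      _ = m ^ (t + 1) * n := by ring

theorem exists_isDominating_card_le [Nonempty V] (t : ℕ)
    (ht : Fintype.card V * Real.log (Fintype.card V) < (G.minDegree + 1) * t) :
    ∃ D : Finset V, #D ≤ t ∧ G.IsDominating D := by
  obtain ⟨D, hDt, hD⟩ := G.exists_card_le_pow_mul_card_undominated_le t
  refine ⟨D, hDt, isDominating_of_undominated_eq_empty (card_eq_zero.mp ?_)⟩
  have hδn : G.minDegree + 1 ≤ Fintype.card V := G.minDegree_lt_card
  have hlt : (Fintype.card V - (G.minDegree + 1)) ^ t * Fintype.card V < Fintype.card V ^ t := by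
    have := mul_sub_pow_lt_pow (by positivity) (by exact_mod_cast hδn) ht
    rw [← Nat.cast_add_one, ← Nat.cast_sub hδn, mul_comm] at this
    exact_mod_cast this
  have : #(G.undominated D) < 1 :=
    Nat.lt_of_mul_lt_mul_left (a := Fintype.card V ^ t) (by rw [mul_one]; exact hD.trans_lt hlt)
  omega

end Greedy

theorem Connected.exists_walk_length_le_three (hG : G.Connected) {D S : Set V}
    (hD : G.IsDominating D) (hS : S.Nonempty) (hDS : ¬D ⊆ S) :
    ∃ s ∈ S, ∃ d ∈ D \ S, ∃ p : G.Walk s d, p.length ≤ 3 := by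
  obtain ⟨d₀, hd₀D, hd₀S⟩ := Set.not_subset.mp hDS
  by_cases hnear : ∃ s ∈ S, ∃ d ∈ D \ S, G.Adj s d
  · obtain ⟨s, hs, d, hd, hsd⟩ := hnear
    exact ⟨s, hs, d, hd, hsd.toWalk, by simp⟩
  push Not at hnear
  obtain ⟨s₀, hs₀⟩ := hS
  -- Leave the closed neighbourhood `T` of `S` along a walk towards `d₀ ∉ T`.
  let T := S ∪ {v | ∃ s ∈ S, G.Adj s v}
  have hd₀T : d₀ ∉ T := by
    rintro (h | ⟨s, hs, hsd₀⟩)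
    exacts [hd₀S h, hnear s hs d₀ ⟨hd₀D, hd₀S⟩ hsd₀]
  obtain ⟨⟨⟨y, z⟩, hyz⟩, -, hyT, hzT⟩ :=
    (hG.preconnected s₀ d₀).some.exists_boundary_dart T (Or.inl hs₀) hd₀T
  have hzS : z ∉ S := fun h => hzT (Or.inl h)
  obtain ⟨x, hx, hxy⟩ : ∃ x ∈ S, G.Adj x y :=
    hyT.resolve_left fun hy => hzT (Or.inr ⟨y, hy, hyz⟩)
  by_cases hzD : z ∈ D
  · exact ⟨x, hx, z, ⟨hzD, hzS⟩, .cons hxy (.cons hyz .nil), by simp⟩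
  obtain ⟨u, huD, hzu⟩ := hD z hzD
  have huS : u ∉ S := fun h => hzT (Or.inr ⟨u, h, hzu.symm⟩)
  exact ⟨x, hx, u, ⟨huD, huS⟩, .cons hxy (.cons hyz (.cons hzu .nil)), by simp⟩

theorem Connected.exists_connected_superset_card_le [DecidableEq V] (hG : G.Connected)
    {D : Finset V} (hD : G.IsDominating D) (S : Finset V)
    (hS : (G.induce (S : Set V)).Connected) :
    ∃ C : Finset V, S ⊆ C ∧ D ⊆ C ∧ (G.induce (C : Set V)).Connected ∧
      #C ≤ #S + 3 * #(D \ S) := by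
  induction hk : #(D \ S) using Nat.strong_induction_on generalizing S with
  | _ k ih =>
  by_cases hDS : D ⊆ S
  · exact ⟨S, subset_rfl, hDS, hS, by omega⟩
  obtain ⟨s, hs, d, ⟨hdD, hdS⟩, p, hp⟩ :=
    hG.exists_walk_length_le_three hD (Set.nonempty_coe_sort.mp hS.nonempty) (mod_cast hDS)
  let P := p.support.toFinset
  have hsP : s ∈ P := List.mem_toFinset.mpr p.start_mem_support
  have hdP : d ∈ P := List.mem_toFinset.mpr p.end_mem_support
  have hconn : (G.induce ((S ∪ P : Finset V) : Set V)).Connected := by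
    rw [coe_union, List.coe_toFinset]
    exact induce_union_connected hS.preconnected p.connected_induce_support.preconnected
      ⟨s, hs, p.start_mem_support⟩
  have hcard : #(S ∪ P) ≤ #S + 3 := by
    have hP : #P ≤ p.length + 1 := (List.toFinset_card_le _).trans p.length_support.le
    have hSP : 1 ≤ #(S ∩ P) := card_pos.mpr ⟨s, mem_inter.mpr ⟨hs, hsP⟩⟩
    have := card_union_add_card_inter S P
    omega
  have hprogress : #(D \ (S ∪ P)) < k := hk ▸ card_lt_card
    ((ssubset_iff_of_subset (sdiff_subset_sdiff subset_rfl subset_union_left)).mpr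
      ⟨d, mem_sdiff.mpr ⟨hdD, hdS⟩, fun h => (mem_sdiff.mp h).2 (mem_union_right S hdP)⟩)
  obtain ⟨C, hSC, hDC, hC, hCcard⟩ := ih _ hprogress (S ∪ P) hconn rfl
  exact ⟨C, subset_union_left.trans hSC, hDC, hC, by omega⟩

theorem IsDominating.exists_connected_superset_card_le [DecidableEq V] (hG : G.Connected)
    {D : Finset V} (hD : G.IsDominating D) (hne : D.Nonempty) :
    ∃ C : Finset V, D ⊆ C ∧ (G.induce (C : Set V)).Connected ∧ #C ≤ 3 * #D := by
  obtain ⟨a, ha⟩ := hne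
  have ha_conn : (G.induce (({a} : Finset V) : Set V)).Connected := by
    rw [coe_singleton, induce_singleton_eq_top]
    exact connected_top
  obtain ⟨C, -, hDC, hC, hCcard⟩ := hG.exists_connected_superset_card_le hD {a} ha_conn
  have hDa : #(D \ {a}) + 1 = #D := by
    rw [sdiff_singleton_eq_erase, card_erase_add_one ha]
  exact ⟨C, hDC, hC, by rw [card_singleton] at hCcard; omega⟩

end SimpleGraph

theorem exists_small_connected_dominating_set_general {V : Type*} [Fintype V]
    (G : SimpleGraph V) [DecidableRel G.Adj] (hG : G.Connected)
    (hδ : Real.log (2 * Fintype.card V) < G.minDegree) :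
    ∃ D : Finset V,
      (G.induce (D : Set V)).Connected ∧
      (∀ v, v ∉ D → ∃ u ∈ D, G.Adj v u) ∧
      (D.card : ℝ) ≤ 6 * Fintype.card V * Real.log (2 * Fintype.card V) / G.minDegree := by
  classical
  have := hG.nonempty
  have hn : (1 : ℝ) ≤ Fintype.card V := mod_cast Fintype.card_pos
  have hδn : (G.minDegree : ℝ) + 1 ≤ Fintype.card V := mod_cast G.minDegree_lt_card
  set n : ℝ := (Fintype.card V : ℝ)
  set δ : ℝ := (G.minDegree : ℝ)
  set x := n * Real.log (2 * n) / (δ + 1)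
  have hlog : 2⁻¹ < Real.log (2 * n) :=
    (by norm_num : (2⁻¹ : ℝ) < 0.6931471803).trans
      (Real.log_two_gt_d9.trans_le (Real.log_le_log two_pos (by linarith)))
  have hδ₀ : 0 < δ := by linarith
  have hx : 2⁻¹ ≤ x := by
    rw [le_div_iff₀ (by positivity)]
    nlinarith
  obtain ⟨D, hDt, hD⟩ := G.exists_isDominating_card_le ⌈x⌉₊ <|
    calc n * Real.log n < n * Real.log (2 * n) := by gcongr; linarith
      _ ≤ (δ + 1) * ⌈x⌉₊ := by rw [← div_le_iff₀' (by positivity)]; exact Nat.le_ceil x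
  obtain ⟨C, hDC, hC, hCD⟩ := hD.exists_connected_superset_card_le hG hD.nonempty
  refine ⟨C, hC, hD.mono (mod_cast hDC), ?_⟩
  calc (#C : ℝ) ≤ 3 * ⌈x⌉₊ := mod_cast hCD.trans (by omega)
    _ ≤ 3 * (2 * x) := by gcongr; exact Nat.ceil_le_two_mul hx
    _ = 6 * n * Real.log (2 * n) / (δ + 1) := by ring
    _ ≤ 6 * n * Real.log (2 * n) / δ := by gcongr; linarith

/-- Every connected graph G with n vertices and minimum degree δ > ln(2n) has a connected
dominating set on at most 6n·ln(2n)/δ vertices. -/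
theorem exists_small_connected_dominating_set {V : Type*} [Fintype V] [Nonempty V]
    (G : SimpleGraph V) [DecidableRel G.Adj] (hG : G.Connected)
    (hδ : Real.log (2 * Fintype.card V) < G.minDegree) :
    ∃ D : Finset V,
      (G.induce (D : Set V)).Connected ∧
      (∀ v, v ∉ D → ∃ u ∈ D, G.Adj v u) ∧
      (D.card : ℝ) ≤ 6 * Fintype.card V * Real.log (2 * Fintype.card V) / G.minDegree :=
  exists_small_connected_dominating_set_general G hG hδ
end

section
/- There exists t_0 such that for every integer t ≥ t_0 and for d = ⌈4t·ln t⌉, every non-empty d-regular graph contains a dominating pseudo-K_t-model. -/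
/-!
Colour the vertices uniformly at random with `t` colours, and let `A v` be the event that some
colour is missing from the neighbourhood `N(v)`. Then `P(A v) ≤ t (1 - 1/t)^d ≤ t⁻³` for
`d ≥ 4 t log t`, and `A v` is determined by the colours on `N(v)`, so it is independent of
all the events `A w` except the at most `d²` ones with `N(w) ∩ N(v) ≠ ∅`. As
`t⁻³ ≤ x (1 - x)^(d²)` for `x = 1 / (d² + 1)` once `t` is large, the Lovász Local Lemma gives
a colouring in which every neighbourhood sees every colour, and then the colour classes form
a dominating pseudo-`K_t`-model.

Probabilities are counts of functions `ι → κ` (the uniform product space), and the local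
lemma is the usual induction on the conditioning set.
-/

open Finset Real

/-- A *dominating pseudo-K_t-model*: pairwise disjoint non-empty vertex subsets such that for
all i < j every vertex of T j has a neighbour in T i (no connectedness requirement). -/
def SimpleGraph.IsPseudoDomKtModel {V : Type*} (G : SimpleGraph V) (t : ℕ)
    (T : Fin t → Set V) : Prop :=
  (∀ i, (T i).Nonempty) ∧
  (Pairwise fun i j => Disjoint (T i) (T j)) ∧
  (∀ i j : Fin t, i < j → ∀ v ∈ T j, ∃ u ∈ T i, G.Adj v u)

namespace LocalLemma

variable {ι κ α : Type*} [Fintype ι] [DecidableEq ι] [Fintype κ] [DecidableEq κ]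

theorem card_inter_mul_card_eq {A B : Finset (ι → κ)} {s : Finset ι}
    (hA : DependsOn (· ∈ A) (s : Set ι)) (hB : DependsOn (· ∈ B) (↑s)ᶜ) :
    #(A ∩ B) * Fintype.card (ι → κ) = #A * #B := by
  have onS (f g : ι → κ) : ∀ a ∈ (s : Set ι), f a = s.piecewise f g a :=
    fun a ha => (s.piecewise_eq_of_mem _ _ ha).symm
  have offS (f g : ι → κ) : ∀ a ∈ (↑s : Set ι)ᶜ, g a = s.piecewise f g a :=
    fun a ha => (s.piecewise_eq_of_notMem _ _ ha).symm
  -- exchanging two functions outside `s` matches `(A ∩ B) × univ` with `A × B`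
  let swap (p : (ι → κ) × (ι → κ)) := (s.piecewise p.1 p.2, s.piecewise p.2 p.1)
  have swap_swap (p) : swap (swap p) = p := by
    ext a <;> by_cases ha : a ∈ s <;> simp [swap, ha]
  rw [← card_univ, ← card_product, ← card_product]
  refine card_nbij' swap swap ?_ ?_ (fun p _ => swap_swap p) (fun p _ => swap_swap p)
  · rintro ⟨f, g⟩ hfg
    simp only [coe_product, coe_inter, Set.mem_prod, Set.mem_inter_iff, mem_coe] at hfg ⊢
    exact ⟨(hA (onS f g)).mp hfg.1.1, (hB (offS g f)).mp hfg.1.2⟩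
  · rintro ⟨f, g⟩ hfg
    simp only [coe_product, coe_inter, Set.mem_prod, Set.mem_inter_iff, mem_coe] at hfg ⊢
    exact ⟨⟨(hA (onS f g)).mp hfg.1, (hB (offS f g)).mp hfg.2⟩, mem_univ _⟩

variable (A : α → Finset (ι → κ))

def avoiding (S : Finset α) : Finset (ι → κ) := {f | ∀ j ∈ S, f ∉ A j}

variable {A}

@[simp]
theorem mem_avoiding {S : Finset α} {f : ι → κ} :
    f ∈ avoiding A S ↔ ∀ j ∈ S, f ∉ A j := by
  simp [avoiding]

theorem avoiding_anti {S S' : Finset α} (h : S ⊆ S') : avoiding A S' ⊆ avoiding A S :=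
  fun _ hf => mem_avoiding.2 fun j hj => mem_avoiding.1 hf j (h hj)

@[simp]
theorem avoiding_empty : avoiding A ∅ = univ := by ext; simp

theorem avoiding_insert [DecidableEq α] (j : α) (S : Finset α) :
    avoiding A (insert j S) = avoiding A S \ A j := by
  ext f; simp [and_comm]

theorem dependsOn_mem_avoiding {D : α → Finset ι}
    (hA : ∀ j, DependsOn (· ∈ A j) (D j : Set ι)) (S : Finset α) :
    DependsOn (· ∈ avoiding A S) (⋃ j ∈ S, (D j : Set ι)) := by
  intro f g hfg
  simp only [mem_avoiding, eq_iff_iff]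
  refine forall₂_congr fun j hj => not_congr (hA j fun a ha => hfg a ?_).to_iff
  exact Set.mem_biUnion hj ha

variable [DecidableEq α] {x : ℝ}

theorem pow_mul_card_avoiding_le (hx : x ≤ 1) {S T : Finset α} (hST : Disjoint S T)
    (h : ∀ U ⊂ S ∪ T, ∀ i ∉ U, (#(A i ∩ avoiding A U) : ℝ) ≤ x * #(avoiding A U)) :
    (1 - x) ^ #T * #(avoiding A S) ≤ #(avoiding A (S ∪ T)) := by
  induction T using Finset.induction_on with
  | empty => simp
  | @insert j T hjT ih =>
    have hjST : j ∉ S ∪ T := by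
      simp [hjT, (disjoint_insert_right.1 hST).1]
    have hsub : S ∪ T ⊂ S ∪ insert j T := by
      rw [union_insert]; exact ssubset_insert hjST
    have ih := ih (disjoint_insert_right.1 hST).2 fun U hU => h U (hU.trans hsub)
    have hsplit := card_inter_add_card_sdiff (avoiding A (S ∪ T)) (A j)
    have hbad := h _ hsub j hjST
    rw [inter_comm] at hbad
    rw [union_insert, avoiding_insert, card_insert_of_notMem hjT, pow_succ']
    rw [← @Nat.cast_inj ℝ, Nat.cast_add] at hsplit
    nlinarith

/-- In probabilistic terms: `P(A i | ⋂ j ∈ S, (A j)ᶜ) ≤ x`. -/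
theorem card_inter_avoiding_le [Fintype α] [Nonempty κ] {D : α → Finset ι} {Δ : ℕ}
    (hA : ∀ i, DependsOn (· ∈ A i) (D i : Set ι))
    (hΔ : ∀ i, #{j | j ≠ i ∧ ¬Disjoint (D i) (D j)} ≤ Δ) (hx0 : 0 ≤ x) (hx1 : x ≤ 1)
    (hp : ∀ i, (#(A i) : ℝ) ≤ x * (1 - x) ^ Δ * Fintype.card (ι → κ))
    (S : Finset α) (i : α) (hi : i ∉ S) :
    (#(A i ∩ avoiding A S) : ℝ) ≤ x * #(avoiding A S) := by
  induction S using Finset.strongInduction generalizing i with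
  | H S ih =>
    set S₁ := S.filter fun j => ¬Disjoint (D i) (D j)
    set S₂ := S.filter fun j => Disjoint (D i) (D j)
    have hS : S₂ ∪ S₁ = S := filter_union_filter_not_eq _ S
    have hS₁ : #S₁ ≤ Δ := by
      refine (card_le_card fun j hj => ?_).trans (hΔ i)
      obtain ⟨hjS, hij⟩ := mem_filter.1 hj
      exact mem_filter.2 ⟨mem_univ j, ne_of_mem_of_not_mem hjS hi, hij⟩
    have hS₂ : DependsOn (· ∈ avoiding A S₂) (↑(D i))ᶜ := by
      refine (dependsOn_mem_avoiding hA S₂).mono (Set.iUnion₂_subset fun j hj => ?_)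
      exact Set.subset_compl_iff_disjoint_left.2 (disjoint_coe.2 (mem_filter.1 hj).2)
    have hchain := pow_mul_card_avoiding_le hx1 (disjoint_filter_filter_not S S _)
      fun U hU j hj => ih U (hS ▸ hU) j hj
    rw [hS] at hchain
    have hΩ : (0 : ℝ) < Fintype.card (ι → κ) := by exact_mod_cast Fintype.card_pos
    have hfar : (#(A i ∩ avoiding A S₂) : ℝ) ≤ x * (1 - x) ^ Δ * #(avoiding A S₂) := by
      rw [← mul_le_mul_iff_of_pos_right hΩ]
      calc (#(A i ∩ avoiding A S₂) : ℝ) * Fintype.card (ι → κ)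
        _ = #(A i) * #(avoiding A S₂) := by exact_mod_cast card_inter_mul_card_eq (hA i) hS₂
        _ ≤ x * (1 - x) ^ Δ * Fintype.card (ι → κ) * #(avoiding A S₂) := by
          gcongr; exact hp i
        _ = _ := by ring
    have hpow : (1 - x) ^ Δ ≤ (1 - x) ^ #S₁ :=
      pow_le_pow_of_le_one (by linarith) (by linarith) hS₁
    calc (#(A i ∩ avoiding A S) : ℝ) ≤ #(A i ∩ avoiding A S₂) := by
          gcongr; exact avoiding_anti (hS ▸ subset_union_left)
      _ ≤ x * (1 - x) ^ Δ * #(avoiding A S₂) := hfar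
      _ ≤ x * ((1 - x) ^ #S₁ * #(avoiding A S₂)) := by rw [← mul_assoc]; gcongr
      _ ≤ x * #(avoiding A S) := by gcongr

theorem exists_forall_notMem [Fintype α] [Nonempty κ] {D : α → Finset ι} {Δ : ℕ}
    (hA : ∀ i, DependsOn (· ∈ A i) (D i : Set ι))
    (hΔ : ∀ i, #{j | j ≠ i ∧ ¬Disjoint (D i) (D j)} ≤ Δ) (hx0 : 0 ≤ x) (hx1 : x < 1)
    (hp : ∀ i, (#(A i) : ℝ) ≤ x * (1 - x) ^ Δ * Fintype.card (ι → κ)) :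
    ∃ f : ι → κ, ∀ i, f ∉ A i := by
  have hchain := pow_mul_card_avoiding_le hx1.le (disjoint_empty_left univ)
    fun U _ => card_inter_avoiding_le hA hΔ hx0 hx1.le hp U
  rw [empty_union, avoiding_empty, card_univ] at hchain
  have hpos : (0 : ℝ) < #(avoiding A univ) :=
    (mul_pos (pow_pos (sub_pos.2 hx1) _) (by exact_mod_cast Fintype.card_pos)).trans_le hchain
  obtain ⟨f, hf⟩ := card_pos.1 (by exact_mod_cast hpos)
  exact ⟨f, fun i => mem_avoiding.1 hf i (mem_univ i)⟩

end LocalLemma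

theorem inv_three_mul_le_inv_mul_one_sub_inv_pow (D : ℕ) :
    (3 * ((D : ℝ) + 1))⁻¹ ≤ ((D : ℝ) + 1)⁻¹ * (1 - ((D : ℝ) + 1)⁻¹) ^ D := by
  rw [mul_inv, mul_comm]
  gcongr
  rcases D.eq_zero_or_pos with rfl | hD
  · norm_num
  have hD : (0 : ℝ) < D := by exact_mod_cast hD
  calc (3 : ℝ)⁻¹ ≤ (exp 1)⁻¹ := by gcongr; exact exp_one_lt_d9.le.trans (by norm_num)
    _ ≤ ((1 + (D : ℝ)⁻¹) ^ D)⁻¹ := by gcongr; exact one_add_inv_pow_le_exp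
    _ = (1 - ((D : ℝ) + 1)⁻¹) ^ D := by rw [← inv_pow]; congr 1; field_simp; ring

theorem mul_sub_one_pow_le_pow_div_pow_three {t : ℝ} {d : ℕ} (ht : 1 ≤ t)
    (hd : 4 * t * log t ≤ d) : t * (t - 1) ^ d ≤ t ^ d / t ^ 3 := by
  have ht0 : 0 < t := by linarith
  have hexp : (t - 1) ^ d ≤ t ^ d * exp (-4 * log t) := by
    calc (t - 1) ^ d = t ^ d * (1 - t⁻¹) ^ d := by rw [← mul_pow]; congr 1; field_simp
      _ ≤ t ^ d * exp (-t⁻¹) ^ d := by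
          gcongr
          · exact sub_nonneg.2 (inv_le_one_of_one_le₀ ht)
          · exact one_sub_le_exp_neg _
      _ = t ^ d * exp (-d / t) := by rw [← exp_nat_mul]; ring_nf
      _ ≤ t ^ d * exp (-4 * log t) := by
          gcongr
          rw [div_le_iff₀ ht0]; linarith
  rw [neg_mul, exp_neg, ← log_rpow ht0, exp_log (by positivity)] at hexp
  calc t * (t - 1) ^ d ≤ t * (t ^ d * (t ^ (4 : ℝ))⁻¹) := by gcongr
    _ = t ^ d / t ^ 3 := by norm_cast; field_simp

theorem three_mul_sq_add_one_le_pow_three {t : ℝ} {d : ℕ} (ht : 1248 ^ 2 ≤ t)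
    (hd : d ≤ 4 * t * log t + 1) : 3 * ((d : ℝ) ^ 2 + 1) ≤ t ^ 3 := by
  have ht0 : 0 ≤ t := by linarith
  have hlog : 1 ≤ log t := by
    rw [le_log_iff_exp_le (by linarith)]; linarith [exp_one_lt_d9]
  -- from `log t ≤ 4 t^(1/4)`; the threshold `1248 ^ 2` is `(78 * 4 ^ 2) ^ 2`
  have h78 : 78 * log t ^ 2 ≤ t := by
    have hlog4 : log t ≤ 4 * t ^ (1 / 4 : ℝ) := by
      have := log_le_rpow_div ht0 (ε := 1 / 4) (by norm_num); linarith
    have hsqrt : (1248 : ℝ) ≤ √t := by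
      rw [show (1248 : ℝ) = √(1248 ^ 2) by simp]; exact sqrt_le_sqrt ht
    have hpow : (t ^ (1 / 4 : ℝ)) ^ 2 = √t := by
      rw [← rpow_natCast, ← rpow_mul ht0, sqrt_eq_rpow]; norm_num
    calc 78 * log t ^ 2 ≤ 78 * (4 * t ^ (1 / 4 : ℝ)) ^ 2 := by gcongr
      _ = 1248 * √t := by rw [mul_pow, hpow]; ring
      _ ≤ √t * √t := by gcongr
      _ = t := mul_self_sqrt ht0
  have htlog : 1 ≤ t * log t := by nlinarith
  calc 3 * ((d : ℝ) ^ 2 + 1) ≤ 3 * ((5 * (t * log t)) ^ 2 + (t * log t) ^ 2) := by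
        gcongr <;> nlinarith
    _ = t ^ 2 * (78 * log t ^ 2) := by ring
    _ ≤ t ^ 2 * t := by gcongr
    _ = t ^ 3 := by ring

theorem mul_sub_one_pow_le_inv_mul_one_sub_inv_pow {t : ℝ} {d : ℕ} (ht : 1248 ^ 2 ≤ t)
    (hd₁ : 4 * t * log t ≤ d) (hd₂ : d ≤ 4 * t * log t + 1) :
    t * (t - 1) ^ d ≤
      ((d : ℝ) ^ 2 + 1)⁻¹ * (1 - ((d : ℝ) ^ 2 + 1)⁻¹) ^ (d ^ 2) * t ^ d := by
  have ht0 : 0 < t := by linarith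
  have hx := inv_three_mul_le_inv_mul_one_sub_inv_pow (d ^ 2)
  push_cast at hx
  calc t * (t - 1) ^ d ≤ t ^ d / t ^ 3 := mul_sub_one_pow_le_pow_div_pow_three (by linarith) hd₁
    _ = (t ^ 3)⁻¹ * t ^ d := by ring
    _ ≤ (3 * ((d : ℝ) ^ 2 + 1))⁻¹ * t ^ d := by
        gcongr; exact three_mul_sq_add_one_le_pow_three ht hd₂
    _ ≤ _ := by gcongr

namespace SimpleGraph

theorem isPseudoDomKtModel_of_forall_exists_adj {V : Type*} [Nonempty V] {G : SimpleGraph V}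
    {t : ℕ} {f : V → Fin t} (hf : ∀ v i, ∃ u, G.Adj v u ∧ f u = i) :
    G.IsPseudoDomKtModel t fun i => f ⁻¹' {i} := by
  refine ⟨fun i => ?_, fun i j hij => ?_, fun i j _ v _ => ?_⟩
  · obtain ⟨u, -, hu⟩ := hf (Classical.arbitrary V) i
    exact ⟨u, hu⟩
  · exact Set.disjoint_iff_forall_ne.2 fun u hu v hv huv => hij (hu.symm.trans (huv ▸ hv))
  · obtain ⟨u, huv, hu⟩ := hf v i
    exact ⟨u, hu, huv⟩

variable {V : Type*} [Fintype V] [DecidableEq V] (G : SimpleGraph V) [DecidableRel G.Adj]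

def missingColorEvent (t : ℕ) (v : V) : Finset (V → Fin t) :=
  {f | ∃ i, ∀ u ∈ G.neighborFinset v, f u ≠ i}

theorem dependsOn_mem_missingColorEvent (t : ℕ) (v : V) :
    DependsOn (· ∈ G.missingColorEvent t v) (G.neighborFinset v : Set V) := by
  intro f g hfg
  simp only [missingColorEvent, mem_filter, mem_univ, true_and, eq_iff_iff]
  exact exists_congr fun i => forall₂_congr fun u hu => by rw [hfg u hu]

theorem card_missingColorEvent_le (t : ℕ) (v : V) :
    #(G.missingColorEvent t v) ≤
      t * (t - 1) ^ #(G.neighborFinset v) * t ^ #(G.neighborFinset v)ᶜ := by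
  set N := G.neighborFinset v
  let avoidColor (i : Fin t) := Fintype.piFinset fun u => if u ∈ N then {i}ᶜ else univ
  have hsub : G.missingColorEvent t v ⊆ univ.biUnion avoidColor := by
    intro f hf
    obtain ⟨i, hi⟩ := (mem_filter.1 hf).2
    refine mem_biUnion.2 ⟨i, mem_univ i, Fintype.mem_piFinset.2 fun u => ?_⟩
    by_cases hu : u ∈ N
    · simpa [hu] using hi u hu
    · simp [hu]
  have hcard (i : Fin t) : #(avoidColor i) = (t - 1) ^ #N * t ^ #Nᶜ := by
    have hcompl : #({i}ᶜ : Finset (Fin t)) = t - 1 := by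
      rw [card_compl, card_singleton, Fintype.card_fin]
    simp only [avoidColor, Fintype.card_piFinset, apply_ite card, hcompl, card_univ,
      Fintype.card_fin]
    rw [prod_ite, prod_const, prod_const]
    congr 3 <;> ext <;> simp
  calc #(G.missingColorEvent t v) ≤ #(univ.biUnion avoidColor) := card_le_card hsub
    _ ≤ #(univ : Finset (Fin t)) * ((t - 1) ^ #N * t ^ #Nᶜ) :=
        card_biUnion_le_card_mul _ _ _ fun i _ => (hcard i).le
    _ = t * (t - 1) ^ #N * t ^ #Nᶜ := by rw [card_univ, Fintype.card_fin, mul_assoc]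

theorem card_filter_not_disjoint_neighborFinset_le {d : ℕ} (hG : G.IsRegularOfDegree d)
    (v : V) :
    #{w | w ≠ v ∧ ¬Disjoint (G.neighborFinset v) (G.neighborFinset w)} ≤ d ^ 2 := by
  have hsub :
      ({w | w ≠ v ∧ ¬Disjoint (G.neighborFinset v) (G.neighborFinset w)} : Finset V) ⊆
        (G.neighborFinset v).biUnion (G.neighborFinset ·) := by
    intro w hw
    obtain ⟨u, hvu, hwu⟩ := not_disjoint_iff.1 (mem_filter.1 hw).2.2
    rw [mem_neighborFinset] at hwu
    exact mem_biUnion.2 ⟨u, hvu, (G.mem_neighborFinset u w).2 hwu.symm⟩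
  calc _ ≤ #((G.neighborFinset v).biUnion (G.neighborFinset ·)) := card_le_card hsub
    _ ≤ #(G.neighborFinset v) * d :=
        card_biUnion_le_card_mul _ _ _ fun u _ =>
          (G.card_neighborFinset_eq_degree u).trans_le (hG u).le
    _ = d ^ 2 := by rw [card_neighborFinset_eq_degree, hG v, sq]

theorem exists_coloring_forall_exists_adj {t : ℕ} (ht : 1248 ^ 2 ≤ t)
    (hG : G.IsRegularOfDegree ⌈4 * (t : ℝ) * log t⌉₊) :
    ∃ f : V → Fin t, ∀ v i, ∃ u, G.Adj v u ∧ f u = i := by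
  set d := ⌈4 * (t : ℝ) * log t⌉₊
  set x : ℝ := ((d : ℝ) ^ 2 + 1)⁻¹
  have : Nonempty (Fin t) := ⟨⟨0, by omega⟩⟩
  have ht1 : (1 : ℝ) < t := by norm_cast; omega
  have hd : 0 < d := Nat.ceil_pos.2 <| by have := log_pos ht1; positivity
  have hx1 : x < 1 := inv_lt_one_of_one_lt₀ <| by
    have : (1 : ℝ) ≤ d := by exact_mod_cast hd
    nlinarith
  have hp (v : V) :
      (#(G.missingColorEvent t v) : ℝ) ≤
        x * (1 - x) ^ (d ^ 2) * Fintype.card (V → Fin t) := by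
    have hN : #(G.neighborFinset v) = d := (G.card_neighborFinset_eq_degree v).trans (hG v)
    have hcard := (Nat.cast_le (α := ℝ)).2 (G.card_missingColorEvent_le t v)
    push_cast [hN, Nat.cast_sub (by omega : 1 ≤ t)] at hcard
    have hΩ : (Fintype.card (V → Fin t) : ℝ) = t ^ d * t ^ #(G.neighborFinset v)ᶜ := by
      rw [Fintype.card_fun, Fintype.card_fin, ← card_add_card_compl (G.neighborFinset v), hN]
      push_cast; ring
    have hnum := mul_sub_one_pow_le_inv_mul_one_sub_inv_pow (t := t) (by exact_mod_cast ht)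
      (Nat.le_ceil _) (Nat.ceil_lt_add_one (by positivity)).le
    calc (#(G.missingColorEvent t v) : ℝ)
      _ ≤ t * (t - 1) ^ d * t ^ #(G.neighborFinset v)ᶜ := hcard
      _ ≤ x * (1 - x) ^ (d ^ 2) * t ^ d * t ^ #(G.neighborFinset v)ᶜ := by gcongr ?_ * _
      _ = _ := by rw [hΩ]; ring
  obtain ⟨f, hf⟩ := LocalLemma.exists_forall_notMem (G.dependsOn_mem_missingColorEvent t)
    (G.card_filter_not_disjoint_neighborFinset_le hG) (by positivity) hx1 hp
  refine ⟨f, fun v i => ?_⟩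
  by_contra! h
  exact hf v (mem_filter.2 ⟨mem_univ f, i, fun u hu => h u ((G.mem_neighborFinset v u).1 hu)⟩)

end SimpleGraph

/-- There exists t₀ such that for every t ≥ t₀ and d = ⌈4t·ln t⌉, every non-empty d-regular
graph contains a dominating pseudo-K_t-model. -/
theorem regular_graph_has_pseudoDomKtModel :
    ∃ t₀ : ℕ, ∀ t : ℕ, t₀ ≤ t →
      ∀ {V : Type} [Fintype V] [Nonempty V] (G : SimpleGraph V) [DecidableRel G.Adj],
        G.IsRegularOfDegree ⌈4 * (t : ℝ) * Real.log t⌉₊ →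
        ∃ T : Fin t → Set V, G.IsPseudoDomKtModel t T := by
  refine ⟨1248 ^ 2, fun t ht V _ _ G _ hG => ?_⟩
  classical
  obtain ⟨f, hf⟩ := G.exists_coloring_forall_exists_adj ht hG
  exact ⟨_, SimpleGraph.isPseudoDomKtModel_of_forall_exists_adj hf⟩
end
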